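/- arXiv:2408.12265 — 7 statements merged into one kernel-verified Lean document; each statement's English description precedes it below -/
import Mathlib

section
/- (i) For every nonzero tensor T ∈ ℂ²⊗ℂ²⊗ℂ²⊗ℂ² (a four-qubit state), the maximum of the three two-multirank entries r_{{1,2}}(T), r_{{1,3}}(T), r_{{1,4}}(T) — the ranks of the three 4×4 flattenings corresponding to the bipartitions 12|34, 13|24, 14|23 — is attained at least twice. (ii) Conversely, a triple (a,b,c) of integers with 1 ≤ a,b,c ≤ 4 arises as (r_{{1,2}}(T), r_{{1,3}}(T), r_{{1,4}}(T)) for some nonzero T ∈ (ℂ²)^{⊗4} if and only if its maximum is attained at least twice and (a,b,c) is not a permutation of (1,3,3). -/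
/-!
The three `4 × 4` flattenings satisfy the quartic identity `det M₁₂ + det M₁₄ = det M₁₃`, so if
one of them is invertible, so is another. If `r₁₂ < 4`, adding a suitable basis tensor raises
`r₁₂` by one and each of `r₁₃`, `r₁₄` by at most one; iterating up to full rank gives
`r₁₂ ≤ max r₁₃ r₁₄`, and permuting the factors gives the same bound for every entry, so the
maximum is attained twice. If `r₁₂ = 1` then `T = U ⊗ V` across `12|34`, and `M₁₃ = U ⊗ₖ V` has
rank `rank U * rank V ∈ {0, 1, 2, 4}`, which rules out `(1, 3, 3)`. The remaining triples are
realized by products `U ⊗ V` and by explicit `0/1` tensors.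
-/

namespace QIT

noncomputable section

/-- The coordinate description of the rank-one (simple) tensor
`v 1 ⊗ ⋯ ⊗ v n` with local factors `v i : ℂ^{α i}`.  Throughout, a tensor in
`ℂ^{α 1} ⊗ ⋯ ⊗ ℂ^{α n}` (each local space `ℂ^{α i}` being the space `α i → ℂ`
with its standard basis) is identified with its coefficient array, a function
`(∀ i, α i) → ℂ` on multi-indices. -/
def prodTensor {ι : Type} [Fintype ι] {α : ι → Type} (v : ∀ i, α i → ℂ) :
    (∀ i, α i) → ℂ :=
  fun j => ∏ i, v i (j i)

/-- `T` has tensor rank at most `r`: it is a sum of `r` simple tensors. -/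
def HasRankLE {ι : Type} [Fintype ι] {α : ι → Type} (T : (∀ i, α i) → ℂ) (r : ℕ) : Prop :=
  ∃ v : Fin r → ∀ i, α i → ℂ, T = ∑ p, prodTensor (v p)

/-- The tensor rank of `T`. -/
def tensorRank {ι : Type} [Fintype ι] {α : ι → Type} (T : (∀ i, α i) → ℂ) : ℕ :=
  sInf {r | HasRankLE T r}

/-- The border rank of `T`: the smallest `r` such that `T` is a limit of tensors
of rank at most `r`. -/
def borderRank {ι : Type} [Fintype ι] {α : ι → Type} (T : (∀ i, α i) → ℂ) : ℕ :=
  sInf {r | T ∈ closure {S : (∀ i, α i) → ℂ | HasRankLE S r}}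

/-- The slice of `T` in the `i`-th factor determined by the multi-index `m`
(the value of `m` at `i` is irrelevant). -/
def sliceAt {ι : Type} [DecidableEq ι] {α : ι → Type} (T : (∀ i, α i) → ℂ) (i : ι)
    (m : ∀ j, α j) : α i → ℂ :=
  fun k => T (Function.update m i k)

/-- `T ∈ V' ⊗ (⊗_{j ≠ i} V_j)` in the `i`-th factor: all `i`-th slices of `T`
lie in the subspace `V'`. -/
def FactorIn {ι : Type} [DecidableEq ι] {α : ι → Type} (T : (∀ i, α i) → ℂ) (i : ι)
    (V' : Submodule ℂ (α i → ℂ)) : Prop :=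
  ∀ m : ∀ j, α j, sliceAt T i m ∈ V'

/-- `T` is concise in the `i`-th factor: `T ∉ V' ⊗ (⊗_{j ≠ i} V_j)` for every
proper subspace `V' ⊊ V_i`. -/
def Concise {ι : Type} [DecidableEq ι] {α : ι → Type} (T : (∀ i, α i) → ℂ) (i : ι) : Prop :=
  ∀ V' : Submodule ℂ (α i → ℂ), FactorIn T i V' → V' = ⊤

/-- Contraction `⟨f|T` of the first factor of `T` with a covector `f`. -/
def contractFirst {n : ℕ} {α : Fin (n + 1) → Type} (f : (α 0 → ℂ) →ₗ[ℂ] ℂ)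
    (T : (∀ i, α i) → ℂ) : (∀ i : Fin n, α i.succ) → ℂ :=
  fun m => f (fun k => T (Fin.cons k m))

/-- Persistent tensors, defined inductively: a bipartite tensor is persistent
iff it is `1`-concise; an `n`-partite tensor (`n > 2`) is persistent iff it is
`1`-concise and there is a proper subspace `S ⊊ V₁^∨` such that `⟨f|T` is
persistent whenever `f ∉ S`. -/
def Persistent : {n : ℕ} → {α : Fin n → Type} → ((∀ i, α i) → ℂ) → Prop
  | 0, _, _ => False
  | 1, _, _ => False
  | 2, _, T => Concise T 0
  | (n + 3), α, T =>
      Concise T 0 ∧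
      ∃ S : Submodule ℂ ((α 0 → ℂ) →ₗ[ℂ] ℂ), S ≠ ⊤ ∧
        ∀ f : (α 0 → ℂ) →ₗ[ℂ] ℂ, f ∉ S → Persistent (contractFirst f T)

/-- Apply the linear maps with matrices `A i` to the factors of `T`
(the coordinate form of `(A 1 ⊗ ⋯ ⊗ A n) T`). -/
def applyLin {ι : Type} [Fintype ι] [DecidableEq ι] {α β : ι → Type} [∀ i, Fintype (α i)]
    (A : ∀ i, β i → α i → ℂ) (T : (∀ i, α i) → ℂ) : (∀ i, β i) → ℂ :=
  fun j => ∑ m : ∀ i, α i, (∏ i, A i (j i) (m i)) * T m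

/-- `T` can be transformed into `S` via SLOCC. -/
def SLOCCto {ι : Type} [Fintype ι] [DecidableEq ι] {α β : ι → Type} [∀ i, Fintype (α i)]
    (T : (∀ i, α i) → ℂ) (S : (∀ i, β i) → ℂ) : Prop :=
  ∃ A : ∀ i, β i → α i → ℂ, applyLin A T = S

/-- `T` degenerates into `S` via SLOCC: there are local maps `A i (ε)` with
entries polynomial in `ε` and an approximation degree `e` with
`lim_{ε → 0} ε⁻ᵉ (A 1 (ε) ⊗ ⋯ ⊗ A n (ε)) T = S`. -/
def Degenerates {ι : Type} [Fintype ι] [DecidableEq ι] {α β : ι → Type} [∀ i, Fintype (α i)]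
    (T : (∀ i, α i) → ℂ) (S : (∀ i, β i) → ℂ) : Prop :=
  ∃ (A : ∀ i, β i → α i → Polynomial ℂ) (e : ℕ),
    Filter.Tendsto
      (fun ε : ℂ => (ε ^ e)⁻¹ • applyLin (fun i r c => (A i r c).eval ε) T)
      (nhdsWithin 0 {0}ᶜ) (nhds S)

/-- The rank of the flattening of `T` across the bipartition `I | Iᶜ`. -/
def flatRank {ι : Type} [Fintype ι] [DecidableEq ι] {α : ι → Type}
    [∀ i, Fintype (α i)] (T : (∀ i, α i) → ℂ) (I : Finset ι) : ℕ :=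
  Matrix.rank (Matrix.of fun (a : ∀ i : {x // x ∈ I}, α i.1) (b : ∀ i : {x // x ∉ I}, α i.1) =>
    T fun i => if h : i ∈ I then a ⟨i, h⟩ else b ⟨i, h⟩)

/-- The direct sum `T ⊕ S` of two `n`-partite tensors, a tensor with `i`-th
local space `U_i ⊕ V_i`. -/
def directSum {ι : Type} [Fintype ι] {α β : ι → Type}
    (T : (∀ i, α i) → ℂ) (S : (∀ i, β i) → ℂ) : (∀ i, α i ⊕ β i) → ℂ :=
  fun j =>
    if h : ∀ i, (j i).isLeft then T (fun i => (j i).getLeft (h i))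
    else if h' : ∀ i, (j i).isRight then S (fun i => (j i).getRight (h' i))
    else 0

/-- The Kronecker product `T ⊠ S` of two `n`-partite tensors, an `n`-partite
tensor with `i`-th local space `U_i ⊗ V_i`. -/
def kron {ι : Type} {α β : ι → Type} (T : (∀ i, α i) → ℂ) (S : (∀ i, β i) → ℂ) :
    (∀ i, α i × β i) → ℂ :=
  fun j => T (fun i => (j i).1) * S (fun i => (j i).2)

/-- The outer (tensor) product `T ⊗ S` of an `n`-partite and an `m`-partite
tensor, regarded as an `(n+m)`-partite tensor. -/
def outer {ι κ : Type} {α : ι → Type} {β : κ → Type}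
    (T : (∀ i, α i) → ℂ) (S : (∀ k, β k) → ℂ) :
    (∀ x : ι ⊕ κ, Sum.elim α β x) → ℂ :=
  fun j => T (fun i => j (Sum.inl i)) * S (fun k => j (Sum.inr k))

/-- The `m`-fold Kronecker power `T^{⊠ m}` of an `n`-partite tensor with all
local spaces `ℂ^d`: an `n`-partite tensor with local spaces `(ℂ^d)^{⊗ m}`. -/
def kpow (d n : ℕ) (T : (Fin n → Fin d) → ℂ) (m : ℕ) :
    (Fin n → (Fin m → Fin d)) → ℂ :=
  fun j => ∏ t : Fin m, T (fun i => j i t)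

/-- The `n`-qubit W state `W_n = Σ_{i} |0⟩^{⊗(n-i-1)} ⊗ |1⟩ ⊗ |0⟩^{⊗ i}`:
its coefficient on a multi-index is `1` iff exactly one entry is `1`. -/
def Wstate (n : ℕ) : (Fin n → Fin 2) → ℂ :=
  fun m => if (∑ i, (m i : ℕ)) = 1 then 1 else 0

/-- The `n`-qudit GHZ state `G(d,n) = Σ_{j=0}^{d-1} |j⟩^{⊗ n}`. -/
def Gstate (d n : ℕ) : (Fin n → Fin d) → ℂ :=
  fun m => if ∃ j : Fin d, ∀ i, m i = j then 1 else 0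

/-- The `n`-qudit L state `L(d,n) = Σ_{j₁+⋯+jₙ = d-1} |j₁ ⋯ jₙ⟩`. -/
def Lstate (d n : ℕ) : (Fin n → Fin d) → ℂ :=
  fun m => if (∑ i, (m i : ℕ)) = d - 1 then 1 else 0

/-- The `n`-qudit M state
`M(d,n) = Σᵢ |0⟩^{⊗(n-i-1)} |d-1⟩ |0⟩^{⊗ i}
  + Σ_{i+k+l=n-2} Σ_{j=1}^{d-2} |0⟩^{⊗i} |j⟩ |0⟩^{⊗k} |d-j-1⟩ |0⟩^{⊗l}`:
its coefficient on a multi-index is `1` iff the entries sum to `d-1` and at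
most two entries are nonzero. -/
def Mstate (d n : ℕ) : (Fin n → Fin d) → ℂ :=
  fun m =>
    if (∑ i, (m i : ℕ)) = d - 1 ∧
        (Finset.univ.filter fun i => (m i : ℕ) ≠ 0).card ≤ 2 then 1 else 0

/-- The `n`-qudit N state
`N(d,n) = |0⟩^{⊗(n-1)} |d-1⟩ + Σ_{i=0}^{n-2} Σ_{j=1}^{d-1} |0⟩^{⊗(n-i-2)} |j⟩ |0⟩^{⊗i} |d-j-1⟩`:
its coefficient on a multi-index is `1` iff the entries sum to `d-1` and at
most one of the first `n-1` entries is nonzero. -/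
def Nstate (d n : ℕ) : (Fin n → Fin d) → ℂ :=
  fun m =>
    if (∑ i, (m i : ℕ)) = d - 1 ∧
        (Finset.univ.filter fun i : Fin n => (i : ℕ) + 1 < n ∧ (m i : ℕ) ≠ 0).card ≤ 1
    then 1 else 0

/-- Apply a linear endomorphism `π` of the `i`-th local space to the `i`-th
factor of `T`, i.e. `(id^{⊗(i-1)} ⊗ π ⊗ id^{⊗(n-i)}) T`. -/
def applyAtFactor {ι : Type} [DecidableEq ι] {α : ι → Type}
    (T : (∀ i, α i) → ℂ) (i : ι) (π : (α i → ℂ) →ₗ[ℂ] (α i → ℂ)) :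
    (∀ j, α j) → ℂ :=
  fun j => π (sliceAt T i j) (j i)

end

/-- The entries `(r_{12}(T), r_{13}(T), r_{14}(T))` of the two-multirank of a
four-qubit tensor: ranks of the three `4×4` flattenings across the
bipartitions `12|34`, `13|24`, `14|23`. -/
noncomputable def rk2 (I : Finset (Fin 4)) (T : (Fin 4 → Fin 2) → ℂ) : ℕ := flatRank T I

/-- The maximum of `a`, `b`, `c` is attained at least twice. -/
def MaxAttainedTwice (a b c : ℕ) : Prop :=
  (a = max a (max b c) ∧ b = max a (max b c)) ∨
  (a = max a (max b c) ∧ c = max a (max b c)) ∨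
  (b = max a (max b c) ∧ c = max a (max b c))

/-- `(a, b, c)` is a permutation of `(1, 3, 3)`. -/
def IsPerm133 (a b c : ℕ) : Prop :=
  (a = 1 ∧ b = 3 ∧ c = 3) ∨ (a = 3 ∧ b = 1 ∧ c = 3) ∨ (a = 3 ∧ b = 3 ∧ c = 1)


end QIT

open Matrix Module
open scoped Kronecker

namespace Matrix

variable {m n p K : Type*} [Field K]

theorem rank_add_le [Fintype n] (A B : Matrix m n K) : (A + B).rank ≤ A.rank + B.rank :=
  calc (A + B).rank ≤ finrank K ↥(LinearMap.range A.mulVecLin ⊔ LinearMap.range B.mulVecLin) :=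
        Submodule.finrank_mono (by rw [mulVecLin_add]; exact LinearMap.range_add_le _ _)
    _ ≤ A.rank + B.rank := Submodule.finrank_add_le_finrank_add_finrank _ _

theorem rank_single_one_le [Fintype n] [DecidableEq m] [DecidableEq n] (i : m) (j : n) :
    (single i j (1 : K)).rank ≤ 1 :=
  (single_eq_single_vecMulVec_single (α := K) i j).symm ▸ rank_vecMulVec_le _ _

theorem rank_add_single_one_le [Fintype n] [DecidableEq m] [DecidableEq n] (A : Matrix m n K)
    (i : m) (j : n) : (A + single i j 1).rank ≤ A.rank + 1 :=
  (rank_add_le _ _).trans (Nat.add_le_add_left (rank_single_one_le i j) _)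

theorem rank_submatrix_id_swap [Fintype n] (A : Matrix m (n × n) K) :
    (A.submatrix id Prod.swap).rank = A.rank :=
  rank_submatrix A (Equiv.refl _) (Equiv.prodComm _ _)

theorem le_rank_of_det_submatrix_ne_zero [Fintype n] {r : ℕ} (A : Matrix m n K)
    (f : Fin r → m) (g : Fin r → n) (h : (A.submatrix f g).det ≠ 0) : r ≤ A.rank := by
  simpa using (rank_of_det_ne_zero h).symm.le.trans (rank_submatrix_le A f g)

theorem rank_lt_card_width_iff [Fintype n] (A : Matrix m n K) :
    A.rank < Fintype.card n ↔ ∃ x ≠ 0, A *ᵥ x = 0 := by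
  rw [← finrank_fintype_fun_eq_card K, rank, ← A.mulVecLin.finrank_range_add_finrank_ker,
    Nat.lt_add_right_iff_pos, Module.finrank_pos_iff_exists_ne_zero]
  simp [and_comm]

theorem rank_lt_card_iff_det_eq_zero [Fintype n] [DecidableEq n] (A : Matrix n n K) :
    A.rank < Fintype.card n ↔ A.det = 0 := by
  rw [rank_lt_card_width_iff, exists_mulVec_eq_zero_iff]

/-- Below full rank, some matrix unit raises the rank: take `i` with `eᵢ` outside the column
space, and `j` with `xⱼ ≠ 0` for a kernel vector `x`; then `eᵢ` becomes a column combination. -/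
theorem exists_rank_lt_rank_add_single [Fintype m] [Fintype n] [DecidableEq m] [DecidableEq n]
    (A : Matrix m n K) (hm : A.rank < Fintype.card m) (hn : A.rank < Fintype.card n) :
    ∃ i j, A.rank < (A + single i j 1).rank := by
  obtain ⟨i, hi⟩ : ∃ i, Pi.single i 1 ∉ LinearMap.range A.mulVecLin := by
    by_contra! h
    have htop : LinearMap.range A.mulVecLin = ⊤ := by
      rw [eq_top_iff, ← (Pi.basisFun K m).span_eq, Submodule.span_le]
      rintro _ ⟨i, rfl⟩
      simpa using h i
    rw [rank, htop, finrank_top, finrank_fintype_fun_eq_card] at hm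
    exact hm.false
  obtain ⟨x, hx0, hx⟩ := (rank_lt_card_width_iff A).1 hn
  obtain ⟨j, hj⟩ := Function.ne_iff.mp hx0
  refine ⟨i, j, ?_⟩
  have hE : ∀ y, single i j (1 : K) *ᵥ y = y j • Pi.single i 1 := fun y => by
    rw [single_mulVec, one_mul, ← Pi.single_smul', smul_eq_mul, mul_one]; rfl
  have hAx : (A + single i j 1) *ᵥ (x j)⁻¹ • x = Pi.single i 1 := by
    rw [mulVec_smul, add_mulVec, hx, zero_add, hE, smul_smul, inv_mul_cancel₀ hj, one_smul]
  have hle : LinearMap.range A.mulVecLin ⊔ Submodule.span K {Pi.single i 1} ≤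
      LinearMap.range (A + single i j 1).mulVecLin := by
    refine sup_le ?_ ((Submodule.span_singleton_le_iff_mem _ _).2 ⟨_, hAx⟩)
    rintro _ ⟨y, rfl⟩
    refine ⟨y - y j • (x j)⁻¹ • x, ?_⟩
    simp only [mulVecLin_apply, mulVec_sub, mulVec_smul, hAx, add_mulVec, hE]
    abel
  exact (Submodule.finrank_lt_finrank_of_lt (left_lt_sup.2 fun h =>
    hi (Submodule.span_singleton_le_iff_mem _ _ |>.1 h))).trans_le (Submodule.finrank_mono hle)

theorem exists_eq_vecMulVec_of_rank_le_one [Fintype m] [Fintype n] (A : Matrix m n K)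
    (h : A.rank ≤ 1) : ∃ (u : m → K) (v : n → K), A = vecMulVec u v := by
  rw [rank_eq_finrank_span_cols, finrank_le_one_iff] at h
  obtain ⟨⟨u, _⟩, hu⟩ := h
  choose v hv using fun j => hu ⟨A.col j, Submodule.subset_span ⟨j, rfl⟩⟩
  refine ⟨u, v, ext fun i j => ?_⟩
  have := congr_fun (congr_arg Subtype.val (hv j)) i
  simp only [Submodule.coe_smul, Pi.smul_apply, smul_eq_mul, col_apply] at this
  rw [vecMulVec_apply, ← this, mul_comm]

theorem rank_mul_mul_of_isUnit [Fintype n] [DecidableEq n] {P Q : Matrix n n K} (hP : IsUnit P)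
    (hQ : IsUnit Q) (A : Matrix n n K) : (P * A * Q).rank = A.rank := by
  rw [rank_mul_eq_left_of_isUnit_det _ _ ((isUnit_iff_isUnit_det Q).1 hQ),
    rank_mul_eq_right_of_isUnit_det _ _ ((isUnit_iff_isUnit_det P).1 hP)]

theorem exists_isUnit_mul_mul_eq_diagonal [Fintype n] [DecidableEq n] (A : Matrix n n K) :
    ∃ (P Q : Matrix n n K) (w : n → K), IsUnit P ∧ IsUnit Q ∧ P * A * Q = diagonal w := by
  obtain ⟨P, Q, e, hP, hQ, h⟩ := exists_rank_normal_form A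
  rw [← diagonal_one, ← diagonal_zero, fromBlocks_diagonal, submatrix_diagonal_equiv] at h
  exact ⟨P, Q, _, hP, hQ, h⟩

theorem _root_.IsUnit.kronecker [Fintype n] [Fintype p] [DecidableEq n] [DecidableEq p]
    {A : Matrix n n K} {B : Matrix p p K} (hA : IsUnit A) (hB : IsUnit B) : IsUnit (A ⊗ₖ B) := by
  rw [isUnit_iff_isUnit_det, det_kronecker]
  exact ((isUnit_iff_isUnit_det A).1 hA).pow _ |>.mul (((isUnit_iff_isUnit_det B).1 hB).pow _)

theorem rank_kronecker [Fintype n] [Fintype p] [DecidableEq n] [DecidableEq p]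
    (A : Matrix n n K) (B : Matrix p p K) : (A ⊗ₖ B).rank = A.rank * B.rank := by
  classical
  obtain ⟨P, Q, w, hP, hQ, hA⟩ := exists_isUnit_mul_mul_eq_diagonal A
  obtain ⟨P', Q', w', hP', hQ', hB⟩ := exists_isUnit_mul_mul_eq_diagonal B
  have key : (P ⊗ₖ P') * (A ⊗ₖ B) * (Q ⊗ₖ Q') = diagonal fun x => w x.1 * w' x.2 := by
    rw [← mul_kronecker_mul, ← mul_kronecker_mul, hA, hB, diagonal_kronecker_diagonal]
  rw [← rank_mul_mul_of_isUnit (hP.kronecker hP') (hQ.kronecker hQ'), key,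
    ← rank_mul_mul_of_isUnit hP hQ A, hA, ← rank_mul_mul_of_isUnit hP' hQ' B, hB,
    rank_diagonal, rank_diagonal, rank_diagonal, ← Fintype.card_prod]
  exact Fintype.card_congr ((Equiv.subtypeEquivRight fun x => mul_ne_zero_iff).trans
    (Equiv.subtypeProdEquivProd (p := fun i => w i ≠ 0) (q := fun j => w' j ≠ 0)))

end Matrix

namespace QIT

section Pairs

variable {ι β : Type} [DecidableEq ι]

def piPairEquiv {P : ι → Prop} {p q : ι} (hP : ∀ x, P x ↔ x = p ∨ x = q) (hpq : p ≠ q) :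
    (∀ _ : {x // P x}, β) ≃ β × β where
  toFun a := (a ⟨p, (hP p).2 (Or.inl rfl)⟩, a ⟨q, (hP q).2 (Or.inr rfl)⟩)
  invFun b x := if x.1 = p then b.1 else b.2
  left_inv a := funext fun ⟨x, hx⟩ => by
    rcases (hP x).1 hx with rfl | rfl <;> simp [hpq.symm]
  right_inv b := by simp [hpq.symm]

theorem flatRank_eq_rank_of_pairs [Fintype ι] [Fintype β] (T : (ι → β) → ℂ) (I : Finset ι)
    {p q r s : ι} (hI : ∀ x, x ∈ I ↔ x = p ∨ x = q) (hIc : ∀ x, x ∉ I ↔ x = r ∨ x = s)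
    (hpq : p ≠ q) (hrs : r ≠ s) :
    flatRank T I = (of fun a b : β × β => T fun x =>
      if x = p then a.1 else if x = q then a.2 else if x = r then b.1 else b.2).rank := by
  rw [flatRank, ← rank_submatrix _ (piPairEquiv hI hpq).symm (piPairEquiv hIc hrs).symm]
  congr 1
  ext a b
  simp only [submatrix_apply, of_apply]
  congr 1
  funext x
  by_cases hx : x ∈ I
  · rcases (hI x).1 hx with rfl | rfl <;> simp [piPairEquiv, hx, hpq.symm]
  · have hxp : x ≠ p := fun h => hx ((hI x).2 (Or.inl h))
    have hxq : x ≠ q := fun h => hx ((hI x).2 (Or.inr h))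
    simp [piPairEquiv, hx, hxp, hxq]

end Pairs

-- `flat1k` is the paper's flattening `M_{1k}`; with 0-based indices it is `rk2 {0, k - 1}`.
def flat12 (T : (Fin 4 → Fin 2) → ℂ) : Matrix (Fin 2 × Fin 2) (Fin 2 × Fin 2) ℂ :=
  of fun a b => T ![a.1, a.2, b.1, b.2]

def flat13 (T : (Fin 4 → Fin 2) → ℂ) : Matrix (Fin 2 × Fin 2) (Fin 2 × Fin 2) ℂ :=
  of fun a b => T ![a.1, b.1, a.2, b.2]

def flat14 (T : (Fin 4 → Fin 2) → ℂ) : Matrix (Fin 2 × Fin 2) (Fin 2 × Fin 2) ℂ :=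
  of fun a b => T ![a.1, b.1, b.2, a.2]

theorem rk2_zero_one (T : (Fin 4 → Fin 2) → ℂ) : rk2 {0, 1} T = (flat12 T).rank := by
  rw [rk2, flatRank_eq_rank_of_pairs T _ (p := 0) (q := 1) (r := 2) (s := 3) (by decide)
    (by decide) (by decide) (by decide)]
  congr; ext a b; congr 1; funext x; fin_cases x <;> rfl

theorem rk2_zero_two (T : (Fin 4 → Fin 2) → ℂ) : rk2 {0, 2} T = (flat13 T).rank := by
  rw [rk2, flatRank_eq_rank_of_pairs T _ (p := 0) (q := 2) (r := 1) (s := 3) (by decide)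
    (by decide) (by decide) (by decide)]
  congr; ext a b; congr 1; funext x; fin_cases x <;> rfl

theorem rk2_zero_three (T : (Fin 4 → Fin 2) → ℂ) : rk2 {0, 3} T = (flat14 T).rank := by
  rw [rk2, flatRank_eq_rank_of_pairs T _ (p := 0) (q := 3) (r := 1) (s := 2) (by decide)
    (by decide) (by decide) (by decide)]
  congr; ext a b; congr 1; funext x; fin_cases x <;> rfl

theorem card_fin_two_prod : Fintype.card (Fin 2 × Fin 2) = 4 := rfl

def finFourEquiv : Fin 4 ≃ Fin 2 × Fin 2 where
  toFun := ![(0, 0), (0, 1), (1, 0), (1, 1)]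
  invFun a := ![![0, 1], ![2, 3]] a.1 a.2
  left_inv := by decide
  right_inv := by decide

theorem det_flat12_add_det_flat14 (T : (Fin 4 → Fin 2) → ℂ) :
    (flat12 T).det + (flat14 T).det = (flat13 T).det := by
  rw [← det_submatrix_equiv_self finFourEquiv (flat12 T),
    ← det_submatrix_equiv_self finFourEquiv (flat13 T),
    ← det_submatrix_equiv_self finFourEquiv (flat14 T)]
  simp only [det_succ_row_zero (n := 3), Fin.sum_univ_succ, det_fin_three, submatrix_apply]
  simp [flat12, flat13, flat14, finFourEquiv, Fin.succAbove, Fin.lt_def]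
  ring

theorem flat12_add (T S : (Fin 4 → Fin 2) → ℂ) : flat12 (T + S) = flat12 T + flat12 S := rfl

theorem flat13_add (T S : (Fin 4 → Fin 2) → ℂ) : flat13 (T + S) = flat13 T + flat13 S := rfl

theorem flat14_add (T S : (Fin 4 → Fin 2) → ℂ) : flat14 (T + S) = flat14 T + flat14 S := rfl

theorem flat12_single (v : Fin 4 → Fin 2) :
    flat12 (Pi.single v 1) = single (v 0, v 1) (v 2, v 3) 1 := by
  ext a b
  simp [flat12, Pi.single_apply, single_apply, funext_iff, Fin.forall_fin_succ, Prod.ext_iff]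
  grind

theorem flat13_single (v : Fin 4 → Fin 2) :
    flat13 (Pi.single v 1) = single (v 0, v 2) (v 1, v 3) 1 := by
  ext a b
  simp [flat13, Pi.single_apply, single_apply, funext_iff, Fin.forall_fin_succ, Prod.ext_iff]
  grind

theorem flat14_single (v : Fin 4 → Fin 2) :
    flat14 (Pi.single v 1) = single (v 0, v 3) (v 1, v 2) 1 := by
  ext a b
  simp [flat14, Pi.single_apply, single_apply, funext_iff, Fin.forall_fin_succ, Prod.ext_iff]
  grind

theorem rank_flat12_le_max (T : (Fin 4 → Fin 2) → ℂ) :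
    (flat12 T).rank ≤ max (flat13 T).rank (flat14 T).rank := by
  obtain ⟨k, hk⟩ : ∃ k, (flat12 T).rank + k = 4 :=
    ⟨_, Nat.add_sub_cancel' ((rank_le_card_height _).trans_eq card_fin_two_prod)⟩
  induction k generalizing T with
  | zero =>
    have h12 : (flat12 T).det ≠ 0 := fun h => by
      have := (rank_lt_card_iff_det_eq_zero _).2 h
      rw [card_fin_two_prod] at this
      omega
    have : (flat13 T).det ≠ 0 ∨ (flat14 T).det ≠ 0 := by
      by_contra! h
      exact h12 (by linear_combination det_flat12_add_det_flat14 T + h.1 - h.2)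
    rcases this with h | h <;> simp only [rank_of_det_ne_zero h, card_fin_two_prod] <;> omega
  | succ k ih =>
    obtain ⟨a, b, hab⟩ := exists_rank_lt_rank_add_single (flat12 T)
      (by rw [card_fin_two_prod]; omega) (by rw [card_fin_two_prod]; omega)
    let v : Fin 4 → Fin 2 := ![a.1, a.2, b.1, b.2]
    have h12 : (flat12 (T + Pi.single v 1)).rank = (flat12 T).rank + 1 := by
      have := rank_add_single_one_le (flat12 T) a b
      rw [flat12_add, flat12_single]
      change (flat12 T + single a b 1).rank = _
      omega
    have h13 : (flat13 (T + Pi.single v 1)).rank ≤ (flat13 T).rank + 1 := by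
      rw [flat13_add, flat13_single]; exact rank_add_single_one_le _ _ _
    have h14 : (flat14 (T + Pi.single v 1)).rank ≤ (flat14 T).rank + 1 := by
      rw [flat14_add, flat14_single]; exact rank_add_single_one_le _ _ _
    have := ih (T + Pi.single v 1) (by omega)
    omega

def permuteFactors (σ : Equiv.Perm (Fin 4)) (T : (Fin 4 → Fin 2) → ℂ) :
    (Fin 4 → Fin 2) → ℂ :=
  fun m => T (m ∘ σ)

theorem permuteFactors_ne_zero {σ : Equiv.Perm (Fin 4)} {T : (Fin 4 → Fin 2) → ℂ} (hT : T ≠ 0) :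
    permuteFactors σ T ≠ 0 := fun h => hT <| funext fun m => by
  simpa [permuteFactors, Function.comp_assoc] using congr_fun h (m ∘ σ.symm)

noncomputable def twoMultirank (T : (Fin 4 → Fin 2) → ℂ) : ℕ × ℕ × ℕ :=
  ((flat12 T).rank, (flat13 T).rank, (flat14 T).rank)

theorem twoMultirank_permuteFactors_swap_one_two (T : (Fin 4 → Fin 2) → ℂ) :
    twoMultirank (permuteFactors (Equiv.swap 1 2) T) =
      ((flat13 T).rank, (flat12 T).rank, (flat14 T).rank) := by
  have h12 : flat12 (permuteFactors (Equiv.swap 1 2) T) = flat13 T := by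
    ext a b; exact congrArg T (funext fun x => by fin_cases x <;> rfl)
  have h13 : flat13 (permuteFactors (Equiv.swap 1 2) T) = flat12 T := by
    ext a b; exact congrArg T (funext fun x => by fin_cases x <;> rfl)
  have h14 : flat14 (permuteFactors (Equiv.swap 1 2) T) = (flat14 T).submatrix id Prod.swap := by
    ext a b; exact congrArg T (funext fun x => by fin_cases x <;> rfl)
  rw [twoMultirank, h12, h13, h14, rank_submatrix_id_swap]

theorem twoMultirank_permuteFactors_swap_one_three (T : (Fin 4 → Fin 2) → ℂ) :
    twoMultirank (permuteFactors (Equiv.swap 1 3) T) =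
      ((flat14 T).rank, (flat13 T).rank, (flat12 T).rank) := by
  have h12 : flat12 (permuteFactors (Equiv.swap 1 3) T) = (flat14 T).submatrix id Prod.swap := by
    ext a b; exact congrArg T (funext fun x => by fin_cases x <;> rfl)
  have h13 : flat13 (permuteFactors (Equiv.swap 1 3) T) = (flat13 T).submatrix id Prod.swap := by
    ext a b; exact congrArg T (funext fun x => by fin_cases x <;> rfl)
  have h14 : flat14 (permuteFactors (Equiv.swap 1 3) T) = (flat12 T).submatrix id Prod.swap := by
    ext a b; exact congrArg T (funext fun x => by fin_cases x <;> rfl)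
  rw [twoMultirank, h12, h13, h14, rank_submatrix_id_swap, rank_submatrix_id_swap,
    rank_submatrix_id_swap]

theorem rank_flat13_le_max (T : (Fin 4 → Fin 2) → ℂ) :
    (flat13 T).rank ≤ max (flat12 T).rank (flat14 T).rank := by
  have h := twoMultirank_permuteFactors_swap_one_two T
  simp only [twoMultirank, Prod.mk.injEq] at h
  simpa only [h] using rank_flat12_le_max (permuteFactors (Equiv.swap 1 2) T)

theorem rank_flat14_le_max (T : (Fin 4 → Fin 2) → ℂ) :
    (flat14 T).rank ≤ max (flat12 T).rank (flat13 T).rank := by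
  have h := twoMultirank_permuteFactors_swap_one_three T
  simp only [twoMultirank, Prod.mk.injEq] at h
  simpa only [h, max_comm] using rank_flat12_le_max (permuteFactors (Equiv.swap 1 3) T)

theorem maxAttainedTwice_twoMultirank (T : (Fin 4 → Fin 2) → ℂ) :
    MaxAttainedTwice (flat12 T).rank (flat13 T).rank (flat14 T).rank := by
  have := rank_flat12_le_max T
  have := rank_flat13_le_max T
  have := rank_flat14_le_max T
  unfold MaxAttainedTwice
  omega

def pairTensor (U V : Matrix (Fin 2) (Fin 2) ℂ) : (Fin 4 → Fin 2) → ℂ :=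
  fun m => U (m 0) (m 1) * V (m 2) (m 3)

theorem flat12_pairTensor (U V : Matrix (Fin 2) (Fin 2) ℂ) :
    flat12 (pairTensor U V) = vecMulVec (fun a => U a.1 a.2) (fun b => V b.1 b.2) := rfl

theorem flat13_pairTensor (U V : Matrix (Fin 2) (Fin 2) ℂ) : flat13 (pairTensor U V) = U ⊗ₖ V :=
  rfl

theorem flat14_pairTensor (U V : Matrix (Fin 2) (Fin 2) ℂ) : flat14 (pairTensor U V) = U ⊗ₖ Vᵀ :=
  rfl

theorem exists_eq_pairTensor_of_rank_flat12_le_one {T : (Fin 4 → Fin 2) → ℂ}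
    (h : (flat12 T).rank ≤ 1) : ∃ U V, T = pairTensor U V := by
  obtain ⟨u, v, huv⟩ := exists_eq_vecMulVec_of_rank_le_one _ h
  refine ⟨of fun i j => u (i, j), of fun k l => v (k, l), funext fun m => ?_⟩
  have := congr_fun₂ huv (m 0, m 1) (m 2, m 3)
  rw [flat12, of_apply, vecMulVec_apply] at this
  exact (congrArg T (funext fun x => by fin_cases x <;> rfl)).trans this

theorem rank_flat13_ne_three_of_rank_flat12_le_one {T : (Fin 4 → Fin 2) → ℂ}
    (h : (flat12 T).rank ≤ 1) : (flat13 T).rank ≠ 3 := by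
  obtain ⟨U, V, rfl⟩ := exists_eq_pairTensor_of_rank_flat12_le_one h
  rw [flat13_pairTensor, rank_kronecker]
  have hU : U.rank ≤ 2 := (rank_le_card_height U).trans_eq (Fintype.card_fin 2)
  have hV : V.rank ≤ 2 := (rank_le_card_height V).trans_eq (Fintype.card_fin 2)
  interval_cases U.rank <;> interval_cases V.rank <;> decide

def IsTwoMultirank (a b c : ℕ) : Prop :=
  ∃ T : (Fin 4 → Fin 2) → ℂ, T ≠ 0 ∧ twoMultirank T = (a, b, c)

theorem IsTwoMultirank.swap_one_two {a b c : ℕ} (h : IsTwoMultirank a b c) :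
    IsTwoMultirank b a c := by
  obtain ⟨T, hT, h⟩ := h
  simp only [twoMultirank, Prod.mk.injEq] at h
  exact ⟨_, permuteFactors_ne_zero hT, by
    rw [twoMultirank_permuteFactors_swap_one_two, h.1, h.2.1, h.2.2]⟩

theorem IsTwoMultirank.swap_one_three {a b c : ℕ} (h : IsTwoMultirank a b c) :
    IsTwoMultirank c b a := by
  obtain ⟨T, hT, h⟩ := h
  simp only [twoMultirank, Prod.mk.injEq] at h
  exact ⟨_, permuteFactors_ne_zero hT, by
    rw [twoMultirank_permuteFactors_swap_one_three, h.1, h.2.1, h.2.2]⟩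

theorem not_isTwoMultirank_one_three_three : ¬ IsTwoMultirank 1 3 3 := by
  rintro ⟨T, -, h⟩
  simp only [twoMultirank, Prod.mk.injEq] at h
  exact rank_flat13_ne_three_of_rank_flat12_le_one h.1.le h.2.1

theorem twoMultirank_permuteFactors_swap_two_three (T : (Fin 4 → Fin 2) → ℂ) :
    twoMultirank (permuteFactors (Equiv.swap 2 3) T) =
      ((flat12 T).rank, (flat14 T).rank, (flat13 T).rank) := by
  have h12 : flat12 (permuteFactors (Equiv.swap 2 3) T) = (flat12 T).submatrix id Prod.swap := by
    ext a b; exact congrArg T (funext fun x => by fin_cases x <;> rfl)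
  have h13 : flat13 (permuteFactors (Equiv.swap 2 3) T) = flat14 T := by
    ext a b; exact congrArg T (funext fun x => by fin_cases x <;> rfl)
  have h14 : flat14 (permuteFactors (Equiv.swap 2 3) T) = flat13 T := by
    ext a b; exact congrArg T (funext fun x => by fin_cases x <;> rfl)
  rw [twoMultirank, h12, h13, h14, rank_submatrix_id_swap]

theorem isTwoMultirank_pairTensor {U V : Matrix (Fin 2) (Fin 2) ℂ} (hU : U ≠ 0) (hV : V ≠ 0) :
    IsTwoMultirank 1 (U.rank * V.rank) (U.rank * V.rank) := by
  obtain ⟨i, j, hij⟩ : ∃ i j, U i j ≠ 0 := by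
    by_contra! h; exact hU (Matrix.ext h)
  obtain ⟨k, l, hkl⟩ : ∃ k l, V k l ≠ 0 := by
    by_contra! h; exact hV (Matrix.ext h)
  refine ⟨pairTensor U V, fun h => mul_ne_zero hij hkl (congr_fun h ![i, j, k, l]), ?_⟩
  rw [twoMultirank, flat13_pairTensor, flat14_pairTensor, rank_kronecker, rank_kronecker,
    rank_transpose]
  congr
  refine le_antisymm (flat12_pairTensor U V ▸ rank_vecMulVec_le _ _) ?_
  refine le_rank_of_det_submatrix_ne_zero _ ![(i, j)] ![(k, l)] ?_
  rw [det_fin_one]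
  exact mul_ne_zero hij hkl

theorem rank_single_zero_zero : (single 0 0 1 : Matrix (Fin 2) (Fin 2) ℂ).rank = 1 :=
  le_antisymm (rank_single_one_le 0 0)
    (le_rank_of_det_submatrix_ne_zero _ ![0] ![0] (by rw [det_fin_one]; simp))

theorem rank_one_fin_two : (1 : Matrix (Fin 2) (Fin 2) ℂ).rank = 2 := by
  rw [rank_one, Fintype.card_fin]

theorem single_zero_zero_ne_zero : (single 0 0 1 : Matrix (Fin 2) (Fin 2) ℂ) ≠ 0 := fun h => by
  simpa using congr_fun₂ h 0 0

theorem isTwoMultirank_one_one_one : IsTwoMultirank 1 1 1 := by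
  simpa [rank_single_zero_zero] using
    isTwoMultirank_pairTensor single_zero_zero_ne_zero single_zero_zero_ne_zero

theorem isTwoMultirank_one_two_two : IsTwoMultirank 1 2 2 := by
  simpa [rank_single_zero_zero, rank_one_fin_two] using
    isTwoMultirank_pairTensor one_ne_zero single_zero_zero_ne_zero

theorem isTwoMultirank_one_four_four : IsTwoMultirank 1 4 4 := by
  simpa [rank_one_fin_two] using
    isTwoMultirank_pairTensor (one_ne_zero (α := Matrix (Fin 2) (Fin 2) ℂ)) one_ne_zero

def supportTensor (S : Finset (Fin 4 → Fin 2)) : (Fin 4 → Fin 2) → ℂ :=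
  fun m => if m ∈ S then 1 else 0

theorem supportTensor_ne_zero {S : Finset (Fin 4 → Fin 2)} (hS : S.Nonempty) :
    supportTensor S ≠ 0 := fun h => by
  obtain ⟨v, hv⟩ := hS
  simpa [supportTensor, hv] using congr_fun h v

theorem rank_flat12_supportTensor_le (S : Finset (Fin 4 → Fin 2)) :
    (flat12 (supportTensor S)).rank ≤ (S.image fun v => (v 0, v 1)).card := by
  refine rank_le_card_of_support_subset _ _ fun a ha => ?_
  obtain ⟨b, hb⟩ := Function.ne_iff.1 ha
  simp only [flat12, supportTensor, row_apply, of_apply, Pi.zero_apply, ne_eq, ite_eq_right_iff,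
    one_ne_zero, imp_false, not_not] at hb
  exact Finset.mem_image.2 ⟨_, hb, rfl⟩

theorem rank_flat13_supportTensor_le (S : Finset (Fin 4 → Fin 2)) :
    (flat13 (supportTensor S)).rank ≤ (S.image fun v => (v 0, v 2)).card := by
  refine rank_le_card_of_support_subset _ _ fun a ha => ?_
  obtain ⟨b, hb⟩ := Function.ne_iff.1 ha
  simp only [flat13, supportTensor, row_apply, of_apply, Pi.zero_apply, ne_eq, ite_eq_right_iff,
    one_ne_zero, imp_false, not_not] at hb
  exact Finset.mem_image.2 ⟨_, hb, rfl⟩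

/-- Invariance under exchanging the last two factors swaps `M₁₃` and `M₁₄`. -/
theorem isTwoMultirank_supportTensor {S : Finset (Fin 4 → Fin 2)} {x y : ℕ} (hS : S.Nonempty)
    (hinv : ∀ m, m ∘ Equiv.swap 2 3 ∈ S ↔ m ∈ S) (h12 : (flat12 (supportTensor S)).rank = x)
    (h13 : (flat13 (supportTensor S)).rank = y) : IsTwoMultirank x y y := by
  refine ⟨_, supportTensor_ne_zero hS, ?_⟩
  have h := twoMultirank_permuteFactors_swap_two_three (supportTensor S)
  rw [show permuteFactors (Equiv.swap 2 3) (supportTensor S) = supportTensor S from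
    funext fun m => by simp only [permuteFactors, supportTensor, hinv]] at h
  simp only [twoMultirank, Prod.mk.injEq] at h ⊢
  exact ⟨h12, h13, h.2.2.trans h13⟩

theorem rank_eq_four_of_det_ne_zero {A : Matrix (Fin 2 × Fin 2) (Fin 2 × Fin 2) ℂ}
    (h : (A.submatrix finFourEquiv finFourEquiv).det ≠ 0) : A.rank = 4 := by
  rw [det_submatrix_equiv_self] at h
  exact (rank_of_det_ne_zero h).trans card_fin_two_prod

theorem isTwoMultirank_two_two_two : IsTwoMultirank 2 2 2 := by
  refine isTwoMultirank_supportTensor (S := {![0, 0, 0, 0], ![1, 1, 1, 1]})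
    (by decide) (by decide) ?_ ?_
  · refine le_antisymm ((rank_flat12_supportTensor_le _).trans_eq (by decide)) ?_
    refine le_rank_of_det_submatrix_ne_zero _ ![(0, 0), (1, 1)] ![(0, 0), (1, 1)] ?_
    simp only [det_fin_two, submatrix_apply]; simp [flat12, supportTensor]
  · refine le_antisymm ((rank_flat13_supportTensor_le _).trans_eq (by decide)) ?_
    refine le_rank_of_det_submatrix_ne_zero _ ![(0, 0), (1, 1)] ![(0, 0), (1, 1)] ?_
    simp only [det_fin_two, submatrix_apply]; simp [flat13, supportTensor]

theorem isTwoMultirank_two_three_three : IsTwoMultirank 2 3 3 := by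
  refine isTwoMultirank_supportTensor (S := {![0, 0, 0, 0], ![1, 1, 0, 1], ![1, 1, 1, 0]})
    (by decide) (by decide) ?_ ?_
  · refine le_antisymm ((rank_flat12_supportTensor_le _).trans_eq (by decide)) ?_
    refine le_rank_of_det_submatrix_ne_zero _ ![(0, 0), (1, 1)] ![(0, 0), (0, 1)] ?_
    simp only [det_fin_two, submatrix_apply]; simp [flat12, supportTensor]
  · refine le_antisymm ((rank_flat13_supportTensor_le _).trans_eq (by decide)) ?_
    refine le_rank_of_det_submatrix_ne_zero _ ![(0, 0), (1, 0), (1, 1)]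
      ![(0, 0), (1, 0), (1, 1)] ?_
    simp only [det_fin_three, submatrix_apply]; simp [flat13, supportTensor]

theorem isTwoMultirank_two_four_four : IsTwoMultirank 2 4 4 := by
  refine isTwoMultirank_supportTensor
    (S := {![0, 0, 0, 0], ![0, 0, 1, 1], ![1, 1, 0, 1], ![1, 1, 1, 0]})
    (by decide) (by decide) ?_ ?_
  · refine le_antisymm ((rank_flat12_supportTensor_le _).trans_eq (by decide)) ?_
    refine le_rank_of_det_submatrix_ne_zero _ ![(0, 0), (1, 1)] ![(0, 0), (0, 1)] ?_
    simp only [det_fin_two, submatrix_apply]; simp [flat12, supportTensor]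
  · refine rank_eq_four_of_det_ne_zero ?_
    simp only [det_succ_row_zero (n := 3), Fin.sum_univ_succ, det_fin_three, submatrix_apply]
    simp [flat13, supportTensor, finFourEquiv, Fin.succAbove, Fin.lt_def]

theorem isTwoMultirank_three_three_three : IsTwoMultirank 3 3 3 := by
  refine isTwoMultirank_supportTensor
    (S := {![0, 0, 0, 0], ![0, 1, 0, 1], ![0, 1, 1, 0], ![1, 0, 1, 1]})
    (by decide) (by decide) ?_ ?_
  · refine le_antisymm ((rank_flat12_supportTensor_le _).trans_eq (by decide)) ?_
    refine le_rank_of_det_submatrix_ne_zero _ ![(0, 0), (0, 1), (1, 0)]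
      ![(0, 0), (0, 1), (1, 1)] ?_
    simp only [det_fin_three, submatrix_apply]; simp [flat12, supportTensor]
  · refine le_antisymm ((rank_flat13_supportTensor_le _).trans_eq (by decide)) ?_
    refine le_rank_of_det_submatrix_ne_zero _ ![(0, 0), (0, 1), (1, 1)]
      ![(0, 0), (0, 1), (1, 0)] ?_
    simp only [det_fin_three, submatrix_apply]; simp [flat13, supportTensor]

theorem isTwoMultirank_three_four_four : IsTwoMultirank 3 4 4 := by
  refine isTwoMultirank_supportTensor
    (S := {![0, 0, 0, 0], ![0, 0, 1, 1], ![0, 1, 0, 0], ![1, 1, 0, 1], ![1, 1, 1, 0]})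
    (by decide) (by decide) ?_ ?_
  · refine le_antisymm ((rank_flat12_supportTensor_le _).trans_eq (by decide)) ?_
    refine le_rank_of_det_submatrix_ne_zero _ ![(0, 0), (0, 1), (1, 1)]
      ![(0, 0), (0, 1), (1, 1)] ?_
    simp only [det_fin_three, submatrix_apply]; simp [flat12, supportTensor]
  · refine rank_eq_four_of_det_ne_zero ?_
    simp only [det_succ_row_zero (n := 3), Fin.sum_univ_succ, det_fin_three, submatrix_apply]
    simp [flat13, supportTensor, finFourEquiv, Fin.succAbove, Fin.lt_def]

theorem isTwoMultirank_four_four_four : IsTwoMultirank 4 4 4 := by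
  refine ⟨supportTensor {![0, 0, 0, 0], ![0, 0, 0, 1], ![0, 0, 1, 0], ![0, 1, 0, 1], ![1, 0, 1, 0],
    ![1, 1, 0, 0], ![1, 1, 1, 1]}, supportTensor_ne_zero (by decide), ?_⟩
  simp only [twoMultirank, Prod.mk.injEq]
  refine ⟨?_, ?_, ?_⟩
  · refine rank_eq_four_of_det_ne_zero ?_
    simp only [det_succ_row_zero (n := 3), Fin.sum_univ_succ, det_fin_three, submatrix_apply]
    simp [flat12, supportTensor, finFourEquiv, Fin.succAbove, Fin.lt_def]
  · refine rank_eq_four_of_det_ne_zero ?_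
    simp only [det_succ_row_zero (n := 3), Fin.sum_univ_succ, det_fin_three, submatrix_apply]
    simp [flat13, supportTensor, finFourEquiv, Fin.succAbove, Fin.lt_def]
  · refine rank_eq_four_of_det_ne_zero ?_
    simp only [det_succ_row_zero (n := 3), Fin.sum_univ_succ, det_fin_three, submatrix_apply]
    simp [flat14, supportTensor, finFourEquiv, Fin.succAbove, Fin.lt_def]

theorem isTwoMultirank_of_le {x y : ℕ} (hx : 1 ≤ x) (hxy : x ≤ y) (hy : y ≤ 4)
    (h13 : ¬(x = 1 ∧ y = 3)) : IsTwoMultirank x y y := by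
  have hx' : x ≤ 4 := hxy.trans hy
  interval_cases x <;> interval_cases y <;> (try omega)
  exacts [isTwoMultirank_one_one_one, isTwoMultirank_one_two_two, isTwoMultirank_one_four_four,
    isTwoMultirank_two_two_two, isTwoMultirank_two_three_three, isTwoMultirank_two_four_four,
    isTwoMultirank_three_three_three, isTwoMultirank_three_four_four,
    isTwoMultirank_four_four_four]

theorem isTwoMultirank_iff {a b c : ℕ} (ha : 1 ≤ a) (ha' : a ≤ 4) (hb : 1 ≤ b) (hb' : b ≤ 4)
    (hc : 1 ≤ c) (hc' : c ≤ 4) :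
    IsTwoMultirank a b c ↔ MaxAttainedTwice a b c ∧ ¬IsPerm133 a b c := by
  constructor
  · intro h
    refine ⟨?_, ?_⟩
    · obtain ⟨T, -, hT⟩ := h
      simp only [twoMultirank, Prod.mk.injEq] at hT
      obtain ⟨rfl, rfl, rfl⟩ := hT
      exact maxAttainedTwice_twoMultirank T
    · rintro (⟨rfl, rfl, rfl⟩ | ⟨rfl, rfl, rfl⟩ | ⟨rfl, rfl, rfl⟩)
      · exact not_isTwoMultirank_one_three_three h
      · exact not_isTwoMultirank_one_three_three h.swap_one_two
      · exact not_isTwoMultirank_one_three_three h.swap_one_three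
  · rintro ⟨hmax, hperm⟩
    unfold MaxAttainedTwice at hmax
    unfold IsPerm133 at hperm
    rcases hmax with ⟨h1, h2⟩ | ⟨h1, h2⟩ | ⟨h1, h2⟩
    · obtain rfl : b = a := by omega
      exact (isTwoMultirank_of_le hc (by omega) ha' (by omega)).swap_one_three
    · obtain rfl : c = a := by omega
      exact (isTwoMultirank_of_le hb (by omega) ha' (by omega)).swap_one_two
    · obtain rfl : c = b := by omega
      exact isTwoMultirank_of_le ha (by omega) hb' (by omega)

/-- (i) for every nonzero four-qubit tensor the maximum of the
three two-multirank entries is attained at least twice; (ii) a triple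
`(a,b,c)` with `1 ≤ a,b,c ≤ 4` is the two-multirank of some nonzero four-qubit
tensor iff its maximum is attained at least twice and it is not a permutation
of `(1,3,3)`. -/
theorem fourQubit_twoMultirank :
    (∀ T : (Fin 4 → Fin 2) → ℂ, T ≠ 0 →
      MaxAttainedTwice (rk2 {0, 1} T) (rk2 {0, 2} T) (rk2 {0, 3} T)) ∧
    (∀ a b c : ℕ, 1 ≤ a → a ≤ 4 → 1 ≤ b → b ≤ 4 → 1 ≤ c → c ≤ 4 →
      ((∃ T : (Fin 4 → Fin 2) → ℂ, T ≠ 0 ∧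
          rk2 {0, 1} T = a ∧ rk2 {0, 2} T = b ∧ rk2 {0, 3} T = c) ↔
        (MaxAttainedTwice a b c ∧ ¬ IsPerm133 a b c))) := by
  simp only [rk2_zero_one, rk2_zero_two, rk2_zero_three]
  refine ⟨fun T _ => maxAttainedTwice_twoMultirank T, fun a b c ha ha' hb hb' hc hc' => ?_⟩
  rw [← isTwoMultirank_iff ha ha' hb hb' hc hc']
  simp only [IsTwoMultirank, twoMultirank, Prod.mk.injEq]

end QIT
end

section
/- For every n ≥ 4, every symmetric tensor T ∈ (ℂ²)^{⊗n} has border rank at most ⌈(n+1)/2⌉. Equivalently, no symmetric entangled n-qubit state lies in the proper locus σ_k ∖ σ_{k−1} of the k-secant variety of the Segre variety of (ℙ¹)^{×n} for k > ⌈(n+1)/2⌉. -/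
open Polynomial Filter Topology Matrix

theorem Polynomial.eventually_nhdsNE_eval_ne_zero {R : Type*} [CommRing R] [IsDomain R]
    [TopologicalSpace R] [T1Space R] {p : R[X]} (hp : p ≠ 0) (a : R) :
    ∀ᶠ z in 𝓝[≠] a, p.eval z ≠ 0 := by
  have : Finite {z | p.IsRoot z} := (finite_setOfPred_isRoot hp).to_subtype
  filter_upwards [nhdsNE_of_nhdsNE_sdiff_finite univ_mem this] with z hz
  simpa using hz

theorem Polynomial.exists_eq_prod_X_sub_C {K : Type*} [Field K] [IsAlgClosed K] {p : K[X]}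
    (hp : p.Monic) {n : ℕ} (hn : p.natDegree = n) :
    ∃ t : Fin n → K, p = ∏ i, (X - C (t i)) := by
  classical
  subst hn
  have hcard : Multiset.card p.roots = p.natDegree := IsAlgClosed.card_roots_eq_natDegree
  let e : p.roots ≃ Fin p.natDegree :=
    Fintype.equivFinOfCardEq (by rw [Multiset.card_coe, hcard])
  refine ⟨fun i => e.symm i, ?_⟩
  rw [e.symm.prod_comp (fun x : p.roots => X - C (x : K)), Finset.prod_eq_multiset_prod,
    Multiset.map_univ p.roots fun x => X - C x,
    prod_multiset_X_sub_C_of_monic_of_roots_card_eq hp hcard]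

theorem Polynomial.continuous_coeff_prod_X_sub_C {ι R : Type*} [Fintype ι] [CommRing R]
    [TopologicalSpace R] [IsTopologicalRing R] (j : ℕ) :
    Continuous fun t : ι → R => (∏ p, (X - C (t p))).coeff j := by
  have hmap : ∀ t : ι → R, ∏ p, (X - C (t p))
      = (∏ p, (X - C (MvPolynomial.X p) : (MvPolynomial ι R)[X])).map (MvPolynomial.eval t) :=
    fun t => by simp [Polynomial.map_prod]
  simp only [hmap, coeff_map]
  exact MvPolynomial.continuous_eval _

theorem eventually_nhdsNE_injective_add_mul {K : Type*} [Field K] [CharZero K]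
    [TopologicalSpace K] [T1Space K] {r : ℕ} (t : Fin r → K) :
    ∀ᶠ ε in 𝓝[≠] (0 : K), Function.Injective fun p => t p + ε * (p : ℕ) := by
  have hpair (p q : Fin r) (hpq : p ≠ q) :
      ∀ᶠ ε in 𝓝[≠] (0 : K), t p + ε * (p : ℕ) ≠ t q + ε * (q : ℕ) := by
    have hP : C (((p : ℕ) : K) - (q : ℕ)) * X + C (t p - t q) ≠ 0 := fun h0 => by
      have h1 := congrArg (coeff · 1) h0
      simp only [coeff_add, coeff_C_mul_X, coeff_C, if_true, one_ne_zero, if_false, add_zero,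
        coeff_zero, sub_eq_zero, Nat.cast_inj] at h1
      exact hpq (Fin.ext h1)
    filter_upwards [eventually_nhdsNE_eval_ne_zero hP 0] with ε hε h
    apply hε
    simp only [eval_add, eval_mul, eval_C, eval_X]
    linear_combination h
  have hall : ∀ᶠ ε in 𝓝[≠] (0 : K), ∀ p q : Fin r, p ≠ q →
      t p + ε * (p : ℕ) ≠ t q + ε * (q : ℕ) :=
    eventually_all.2 fun p => eventually_all.2 fun q => by
      by_cases hpq : p = q
      · exact .of_forall fun _ h => absurd hpq h
      · exact (hpair p q hpq).mono fun _ h _ => h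
  filter_upwards [hall] with ε hε p q h
  by_contra hpq
  exact hε p q hpq h

def weightedPowerSums (R : Type*) [CommSemiring R] (r : ℕ) : Set (ℕ → R) :=
  {u | ∃ t w : Fin r → R, u = fun k => ∑ p, w p * t p ^ k}

namespace Matrix

def hankel {α : Type*} (r : ℕ) (c : ℕ → α) : Matrix (Fin r) (Fin r) α :=
  of fun i j => c (i + j)

theorem hankel_map {α β : Type*} (r : ℕ) (c : ℕ → α) (f : α → β) :
    (hankel r c).map f = hankel r (f ∘ c) :=
  rfl

theorem hankel_powerSum {R : Type*} [CommRing R] {r : ℕ} (t : Fin r → R) :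
    hankel r (fun k => ∑ p, t p ^ k) = (vandermonde t)ᵀ * vandermonde t := by
  ext i j
  simp [hankel, mul_apply, vandermonde_apply, pow_add]

theorem dense_setOf_det_hankel_ne_zero (r : ℕ) :
    Dense {c : ℕ → ℂ | (hankel r c).det ≠ 0} := by
  intro c
  obtain ⟨c₁, hc₁⟩ : ∃ c₁ : ℕ → ℂ, (hankel r c₁).det ≠ 0 := by
    refine ⟨fun k => ∑ p : Fin r, ((p : ℕ) : ℂ) ^ k, ?_⟩
    rw [hankel_powerSum, det_mul, det_transpose]
    exact mul_self_ne_zero.mpr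
      (det_vandermonde_ne_zero_iff.mpr fun p q h => Fin.ext (by exact_mod_cast h))
  set P : ℂ[X] := (hankel r fun k => C (c k) + X * C (c₁ k - c k)).det
  have hP (z : ℂ) : P.eval z = (hankel r (c + z • (c₁ - c))).det := by
    rw [← coe_evalRingHom, RingHom.map_det, RingHom.mapMatrix_apply, hankel_map]
    congr 2
    ext k
    simp
  have hP0 : P ≠ 0 := fun h0 => hc₁ (by simpa [h0] using (hP 1).symm)
  have hlim : Tendsto (fun z : ℂ => c + z • (c₁ - c)) (𝓝[≠] 0) (𝓝 c) :=
    ((by fun_prop : Continuous fun z : ℂ => c + z • (c₁ - c)).tendsto' 0 c (by simp)).mono_left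
      nhdsWithin_le_nhds
  exact mem_closure_of_tendsto hlim <|
    (eventually_nhdsNE_eval_ne_zero hP0 0).mono fun z hz => by rwa [hP] at hz

end Matrix

namespace LinearRecurrence

theorem continuous_mkSol {R : Type*} [CommSemiring R] [TopologicalSpace R]
    [IsTopologicalSemiring R] {r : ℕ} (init : Fin r → R) (k : ℕ) :
    Continuous fun a : Fin r → R => (mk r a).mkSol init k := by
  induction k using Nat.strong_induction_on with
  | _ k ih =>
    rcases lt_or_ge k r with hk | hk
    · have h (a : Fin r → R) : (mk r a).mkSol init k = init ⟨k, hk⟩ :=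
        (mk r a).mkSol_eq_init init ⟨k, hk⟩
      simpa only [h] using continuous_const
    · obtain ⟨m, rfl⟩ := Nat.exists_eq_add_of_le' hk
      simp only [fun a => (mk r a).is_sol_mkSol init m]
      exact continuous_finsetSum Finset.univ fun (i : Fin r) _ =>
        (continuous_apply i).mul (ih (m + i) (by have := i.isLt; omega))

section CommRing

variable {R : Type*} [CommRing R]

noncomputable def ofRoots {r : ℕ} (t : Fin r → R) : LinearRecurrence R :=
  ⟨r, fun j => -(∏ p, (X - C (t p))).coeff j⟩

theorem coeff_charPoly (E : LinearRecurrence R) (j : Fin E.order) :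
    E.charPoly.coeff j = -E.coeffs j := by
  simp [charPoly, coeff_monomial, Fin.val_inj, j.isLt.ne']

theorem charPoly_ofRoots [Nontrivial R] {r : ℕ} (t : Fin r → R) :
    (ofRoots t).charPoly = ∏ p, (X - C (t p)) := by
  set q := ∏ p, (X - C (t p))
  have hq : q.Monic := monic_prod_of_monic _ _ fun p _ => monic_X_sub_C (t p)
  have hdeg : q.natDegree = r := by
    simp [q, natDegree_prod_of_monic _ _ fun p _ => monic_X_sub_C (t p)]
  conv_rhs => rw [hq.as_sum, hdeg]
  simp only [charPoly, ofRoots, ← C_mul_X_pow_eq_monomial, C_1, one_mul, C_neg, neg_mul,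
    Finset.sum_neg_distrib, sub_neg_eq_add]
  exact congrArg _ (Fin.sum_univ_eq_sum_range (fun i => C (q.coeff i) * X ^ i) r)

theorem coeffs_ofRoots (E : LinearRecurrence R) {t : Fin E.order → R}
    (h : E.charPoly = ∏ p, (X - C (t p))) : (ofRoots t).coeffs = E.coeffs := by
  funext j
  change -(∏ p, (X - C (t p))).coeff j = E.coeffs j
  rw [← h]
  exact neg_eq_iff_eq_neg.mpr (coeff_charPoly E j)

end CommRing

variable {K : Type*} [Field K]

theorem mkSol_mem_weightedPowerSums (E : LinearRecurrence K)
    {t : Fin E.order → K} (ht : Function.Injective t) (hroot : ∀ p, E.charPoly.IsRoot (t p))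
    (init : Fin E.order → K) : E.mkSol init ∈ weightedPowerSums K E.order := by
  set V := (vandermonde t)ᵀ
  have hV : IsUnit V.det := by
    rw [det_transpose]
    exact (det_vandermonde_ne_zero_iff.mpr ht).isUnit
  set w := V⁻¹ *ᵥ init
  have hw : V *ᵥ w = init := by
    rw [mulVec_mulVec, mul_nonsing_inv _ hV, one_mulVec]
  have hsol : E.IsSolution fun k => ∑ p, w p * t p ^ k := by
    have hsum : (fun k => ∑ p, w p * t p ^ k) = ∑ p, w p • fun k => t p ^ k := by
      ext k
      simp
    rw [is_sol_iff_mem_solSpace, hsum]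
    exact Submodule.sum_mem _ fun p _ =>
      Submodule.smul_mem _ _ ((E.geom_sol_iff_root_charPoly _).mpr (hroot p))
  refine ⟨t, w, (E.eq_mk_of_is_sol_of_eq_init' hsol fun k => ?_).symm⟩
  simpa [V, mulVec, dotProduct, vandermonde_apply, mul_comm] using congrFun hw k

theorem exists_mkSol_eq_of_det_hankel_ne_zero {r : ℕ} {c : ℕ → K} (h : (hankel r c).det ≠ 0) :
    ∃ a : Fin r → K, ∀ k < 2 * r, (mk r a).mkSol (fun i => c i) k = c k := by
  set a := (hankel r c)⁻¹ *ᵥ fun i : Fin r => c (i + r)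
  have ha : hankel r c *ᵥ a = fun i : Fin r => c (i + r) := by
    rw [mulVec_mulVec, mul_nonsing_inv _ (isUnit_iff_ne_zero.mpr h), one_mulVec]
  refine ⟨a, fun k => ?_⟩
  induction k using Nat.strong_induction_on with
  | _ k ih =>
    intro hk
    rcases lt_or_ge k r with hkr | hkr
    · exact (mk r a).mkSol_eq_init _ ⟨k, hkr⟩
    · obtain ⟨i, rfl⟩ := Nat.exists_eq_add_of_le' hkr
      have hi : i < r := by omega
      rw [(mk r a).is_sol_mkSol _ i, ← congrFun ha ⟨i, hi⟩]
      simp only [mulVec, dotProduct, hankel, of_apply]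
      refine Finset.sum_congr rfl fun j _ => ?_
      rw [ih (i + j) (by omega) (by omega), mul_comm]

theorem mkSol_mem_closure_weightedPowerSums (E : LinearRecurrence ℂ)
    (init : Fin E.order → ℂ) : E.mkSol init ∈ closure (weightedPowerSums ℂ E.order) := by
  obtain ⟨t, ht⟩ := exists_eq_prod_X_sub_C E.charPoly_monic
    (natDegree_eq_of_degree_eq_some E.charPoly_degree_eq_order)
  set s : ℂ → Fin E.order → ℂ := fun ε p => t p + ε * (p : ℕ)
  have hs : Continuous fun ε => (ofRoots (s ε)).mkSol init :=
    continuous_pi fun k => (continuous_mkSol init k).comp <| continuous_pi fun j =>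
      (continuous_coeff_prod_X_sub_C j).neg.comp (by fun_prop)
  have h0 : (ofRoots (s 0)).mkSol init = E.mkSol init := by
    have hs0 : s 0 = t := by simp [s]
    -- the type of `init` mentions the recurrence, so rewrite only its coefficient vector
    change (mk E.order (ofRoots (s 0)).coeffs).mkSol init = (mk E.order E.coeffs).mkSol init
    rw [hs0, coeffs_ofRoots E ht]
  have hlim : Tendsto (fun ε => (ofRoots (s ε)).mkSol init) (𝓝[≠] 0) (𝓝 (E.mkSol init)) :=
    (h0 ▸ hs.tendsto 0).mono_left nhdsWithin_le_nhds
  refine mem_closure_of_tendsto hlim ?_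
  filter_upwards [eventually_nhdsNE_injective_add_mul t] with ε hε
  refine (ofRoots (s ε)).mkSol_mem_weightedPowerSums hε (fun p => ?_) init
  rw [charPoly_ofRoots, IsRoot, eval_prod]
  exact Finset.prod_eq_zero (Finset.mem_univ p) (by simp [s])

end LinearRecurrence

theorem exists_perm_comp_eq_of_sum_val_eq {ι : Type*} [Fintype ι] {m m' : ι → Fin 2}
    (h : ∑ i, (m i : ℕ) = ∑ i, (m' i : ℕ)) : ∃ σ : Equiv.Perm ι, m' ∘ σ = m := by
  classical
  have hfiber (m : ι → Fin 2) (b : Fin 2) :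
      Fintype.card {i // m i = b} = ∑ i, if m i = b then 1 else 0 := by
    rw [Fintype.card_subtype, Finset.card_filter]
  have hzero (m : ι → Fin 2) :
      (∑ i, if m i = 0 then 1 else 0) + ∑ i, (m i : ℕ) = Fintype.card ι := by
    rw [← Finset.sum_add_distrib, Fintype.card_eq_sum_ones]
    refine Finset.sum_congr rfl fun i _ => ?_
    generalize m i = x
    fin_cases x <;> rfl
  have hone (x : Fin 2) : (if x = 1 then 1 else 0) = (x : ℕ) := by
    fin_cases x <;> rfl
  have hcard (b : Fin 2) : Fintype.card {i // m i = b} = Fintype.card {i // m' i = b} := by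
    rw [hfiber, hfiber]
    fin_cases b
    · have := hzero m
      have := hzero m'
      simp only [Fin.zero_eta]
      omega
    · simpa only [Fin.mk_one, hone] using h
  exact ⟨Equiv.ofFiberEquiv fun b => Fintype.equivOfCardEq (hcard b),
    funext (Equiv.ofFiberEquiv_map _)⟩

namespace QIT

def symTensor (n : ℕ) (c : ℕ → ℂ) : (Fin n → Fin 2) → ℂ :=
  fun m => c (∑ i, (m i : ℕ))

theorem continuous_symTensor (n : ℕ) : Continuous (symTensor n) :=
  continuous_pi fun _ => continuous_apply _

theorem symTensor_congr {n : ℕ} {c c' : ℕ → ℂ} (h : ∀ k ≤ n, c k = c' k) :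
    symTensor n c = symTensor n c' :=
  funext fun m => h _ <| (Finset.sum_le_sum fun i _ => Nat.lt_succ_iff.mp (m i).isLt).trans
    (by simp)

theorem exists_eq_symTensor {n : ℕ} {T : (Fin n → Fin 2) → ℂ}
    (hsym : ∀ (σ : Equiv.Perm (Fin n)) (j : Fin n → Fin 2), T (j ∘ σ) = T j) :
    ∃ c, T = symTensor n c := by
  have hfactor : Function.FactorsThrough T fun m : Fin n → Fin 2 => ∑ i, (m i : ℕ) := by
    intro m m' h
    obtain ⟨σ, rfl⟩ := exists_perm_comp_eq_of_sum_val_eq h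
    exact hsym σ m'
  exact ⟨Function.extend _ T 0, funext fun m => (hfactor.extend_apply 0 m).symm⟩

theorem hasRankLE_symTensor {n r : ℕ} (hn : 0 < n) {u : ℕ → ℂ}
    (hu : u ∈ weightedPowerSums ℂ r) : HasRankLE (symTensor n u) r := by
  obtain ⟨t, w, rfl⟩ := hu
  have : NeZero n := ⟨hn.ne'⟩
  refine ⟨fun p i j => (if i = 0 then w p else 1) * t p ^ (j : ℕ), funext fun m => ?_⟩
  simp only [symTensor, Finset.sum_apply, prodTensor]
  refine Finset.sum_congr rfl fun p _ => ?_
  rw [Finset.prod_mul_distrib, Finset.prod_pow_eq_pow_sum]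
  simp [Finset.prod_ite_eq']

theorem symTensor_mem_closure_hasRankLE {n r : ℕ} (hn : 0 < n) (hnr : n < 2 * r)
    (c : ℕ → ℂ) : symTensor n c ∈ closure {S | HasRankLE S r} := by
  have hsums : symTensor n '' weightedPowerSums ℂ r ⊆ {S | HasRankLE S r} := by
    rintro _ ⟨u, hu, rfl⟩
    exact hasRankLE_symTensor hn hu
  have hgeneric : symTensor n '' {c : ℕ → ℂ | (hankel r c).det ≠ 0} ⊆
      closure {S | HasRankLE S r} := by
    rintro _ ⟨c, hc, rfl⟩
    obtain ⟨a, ha⟩ := LinearRecurrence.exists_mkSol_eq_of_det_hankel_ne_zero hc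
    rw [symTensor_congr fun k hk => (ha k (by omega)).symm]
    exact closure_mono hsums <| image_closure_subset_closure_image (continuous_symTensor n) <|
      Set.mem_image_of_mem _ ((LinearRecurrence.mk r a).mkSol_mem_closure_weightedPowerSums _)
  exact closure_minimal hgeneric isClosed_closure
    ((continuous_symTensor n).range_subset_closure_image_dense
      (dense_setOf_det_hankel_ne_zero r) ⟨c, rfl⟩)

/-- for `n ≥ 4`, every symmetric `n`-qubit tensor has border rank
at most `⌈(n+1)/2⌉ = (n+2)/2`. -/
theorem symmetric_borderRank_le (n : ℕ) (hn : 4 ≤ n)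
    (T : (Fin n → Fin 2) → ℂ)
    (hsym : ∀ (σ : Equiv.Perm (Fin n)) (j : Fin n → Fin 2), T (j ∘ σ) = T j) :
    borderRank T ≤ (n + 2) / 2 := by
  obtain ⟨c, rfl⟩ := exists_eq_symTensor hsym
  exact Nat.sInf_le (symTensor_mem_closure_hasRankLE (by omega) (by omega) c)

end QIT
end

section
/- (Substitution method.) Let T ∈ V₁⊗⋯⊗Vₙ be an i-concise tensor. For every proper subspace V_i' ⊊ V_i there exists a linear projection π_i : V_i → V_i' onto V_i' such that rk(T) − rk(π_i T) ≥ dim V_i − dim V_i', where π_i T denotes the application of π_i to the i-th factor of T, i.e., (id^{⊗(i−1)}⊗π_i⊗id^{⊗(n−i)})T. -/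
section Projection

variable {K V κ : Type*} [Field K] [AddCommGroup V] [Module K V]

/-- The projection is `x ↦ x - s (x mod p)`, where the section `s` of the quotient map sends
`b k` to its lift `w k`. -/
theorem Submodule.exists_proj_of_basis_quotient (p : Submodule K V) (b : Module.Basis κ K (V ⧸ p))
    (w : κ → V) (hw : ∀ k, p.mkQ (w k) = b k) :
    ∃ π : V →ₗ[K] V, LinearMap.range π = p ∧ (∀ x ∈ p, π x = x) ∧ ∀ k, π (w k) = 0 := by
  set s : V ⧸ p →ₗ[K] V := b.constr K w
  have hs : p.mkQ ∘ₗ s = LinearMap.id := b.ext fun k => by simp [s, hw]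
  have hπ_mem : ∀ x, x - s (p.mkQ x) ∈ p := fun x => by
    rw [← Submodule.Quotient.mk_eq_zero, ← Submodule.mkQ_apply, map_sub,
      ← LinearMap.comp_apply p.mkQ s, hs, LinearMap.id_apply, sub_self]
  have hπ_fix : ∀ x ∈ p, x - s (p.mkQ x) = x := fun x hx => by
    simp [(Submodule.Quotient.mk_eq_zero p).mpr hx]
  refine ⟨LinearMap.id - s ∘ₗ p.mkQ, le_antisymm ?_ fun x hx => ⟨x, hπ_fix x hx⟩, hπ_fix,
    fun k => by simp [s, hw]⟩
  rintro _ ⟨x, rfl⟩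
  exact hπ_mem x

variable {ι : Type*} [FiniteDimensional K V]

theorem Submodule.exists_proj_vanishing_on_subfamily (p : Submodule K V) (v : ι → V)
    (hv : Submodule.span K (Set.range v) = ⊤) :
    ∃ (π : V →ₗ[K] V) (P : Finset ι), LinearMap.range π = p ∧ (∀ x ∈ p, π x = x) ∧
      (∀ q ∈ P, π (v q) = 0) ∧ P.card = Module.finrank K V - Module.finrank K p := by
  obtain ⟨κ, a, ha, hspan, hli⟩ := exists_linearIndependent' K (p.mkQ ∘ v)
  have hspan_top : ⊤ ≤ Submodule.span K (Set.range (p.mkQ ∘ v ∘ a)) := by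
    rw [← Function.comp_assoc, hspan, Set.range_comp, Submodule.span_image, hv,
      Submodule.map_top, Submodule.range_mkQ]
  let b := Module.Basis.mk hli hspan_top
  have : Fintype κ := FiniteDimensional.fintypeBasisIndex b
  obtain ⟨π, hrange, hfix, hkill⟩ :=
    p.exists_proj_of_basis_quotient b (v ∘ a) fun k => (Module.Basis.mk_apply hli hspan_top k).symm
  refine ⟨π, Finset.univ.map ⟨a, ha⟩, hrange, hfix, ?_, ?_⟩
  · simp only [Finset.mem_map, Finset.mem_univ, true_and, Function.Embedding.coeFn_mk]
    rintro _ ⟨k, rfl⟩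
    exact hkill k
  · rw [Finset.card_map, Finset.card_univ, ← Module.finrank_eq_card_basis b,
      ← p.finrank_quotient_add_finrank, Nat.add_sub_cancel]

end Projection

namespace QIT

section Tensor

variable {ι : Type} {α : ι → Type}

theorem sliceAt_sum [DecidableEq ι] {κ : Type*} (s : Finset κ) (T : κ → (∀ i, α i) → ℂ)
    (i : ι) (m : ∀ j, α j) : sliceAt (∑ p ∈ s, T p) i m = ∑ p ∈ s, sliceAt (T p) i m := by
  funext k
  simp only [sliceAt, Finset.sum_apply]

theorem applyAtFactor_sum [DecidableEq ι] {κ : Type*} (s : Finset κ)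
    (T : κ → (∀ i, α i) → ℂ) (i : ι) (π : (α i → ℂ) →ₗ[ℂ] (α i → ℂ)) :
    applyAtFactor (∑ p ∈ s, T p) i π = ∑ p ∈ s, applyAtFactor (T p) i π := by
  funext m
  simp only [applyAtFactor, sliceAt_sum, map_sum, Finset.sum_apply]

variable [Fintype ι]

theorem hasRankLE_sum {κ : Type*} (s : Finset κ) (w : κ → ∀ i, α i → ℂ) :
    HasRankLE (∑ p ∈ s, prodTensor (w p)) s.card :=
  ⟨fun q => w (s.equivFin.symm q), by
    rw [← Finset.sum_coe_sort s, ← Equiv.sum_comp s.equivFin.symm]⟩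

theorem HasRankLE.tensorRank_le {T : (∀ i, α i) → ℂ} {r : ℕ} (h : HasRankLE T r) :
    tensorRank T ≤ r :=
  Nat.sInf_le h

theorem prodTensor_eq_zero {v : ∀ i, α i → ℂ} {i : ι} (h : v i = 0) : prodTensor v = 0 :=
  funext fun m => Finset.prod_eq_zero (Finset.mem_univ i) (by simp [h])

variable [DecidableEq ι]

/-- Coordinatewise decomposition: `T = ∑ₘ T m • e_m`, the scalar `T m` being put on the
`i`-th factor. -/
theorem hasRankLE_tensorRank [∀ i, Fintype (α i)] (T : (∀ i, α i) → ℂ) (i : ι) :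
    HasRankLE T (tensorRank T) := by
  classical
  let w : (∀ j, α j) → ∀ j, α j → ℂ :=
    fun m j k => if k = m j then (if j = i then T m else 1) else 0
  have hw : ∀ m x, prodTensor (w m) x = if x = m then T m else 0 := by
    intro m x
    by_cases hx : x = m
    · subst hx
      simp [w, prodTensor, Finset.prod_ite_eq']
    · obtain ⟨j, hj⟩ := Function.ne_iff.mp hx
      exact (Finset.prod_eq_zero (Finset.mem_univ j) (by simp [w, hj])).trans (if_neg hx).symm
  have hT : T = ∑ m, prodTensor (w m) := funext fun x => by
    simp [Finset.sum_apply, hw]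
  have h : HasRankLE T Finset.univ.card := hT ▸ hasRankLE_sum Finset.univ w
  exact Nat.sInf_mem (s := {r | HasRankLE T r}) ⟨_, h⟩

theorem prodTensor_update_apply (v : ∀ i, α i → ℂ) (i : ι) (m : ∀ j, α j) (k : α i) :
    prodTensor v (Function.update m i k) = v i k * ∏ j ∈ Finset.univ.erase i, v j (m j) := by
  rw [prodTensor, ← Finset.mul_prod_erase _ _ (Finset.mem_univ i), Function.update_self]
  congr 1
  exact Finset.prod_congr rfl fun j hj => by
    rw [Function.update_of_ne (Finset.ne_of_mem_erase hj)]

theorem sliceAt_prodTensor (v : ∀ i, α i → ℂ) (i : ι) (m : ∀ j, α j) :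
    sliceAt (prodTensor v) i m = (∏ j ∈ Finset.univ.erase i, v j (m j)) • v i := by
  funext k
  rw [sliceAt, prodTensor_update_apply, Pi.smul_apply, smul_eq_mul, mul_comm]

theorem applyAtFactor_prodTensor (v : ∀ i, α i → ℂ) (i : ι) (π : (α i → ℂ) →ₗ[ℂ] (α i → ℂ)) :
    applyAtFactor (prodTensor v) i π = prodTensor (Function.update v i (π (v i))) := by
  funext m
  conv_rhs => rw [← Function.update_eq_self i m, prodTensor_update_apply]
  rw [applyAtFactor, sliceAt_prodTensor, map_smul, Pi.smul_apply, smul_eq_mul, mul_comm,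
    Function.update_self]
  congr 1
  exact Finset.prod_congr rfl fun j hj => by
    rw [Function.update_of_ne (Finset.ne_of_mem_erase hj)]

theorem Concise.span_factor_eq_top {T : (∀ i, α i) → ℂ} {i : ι} (hT : Concise T i) {r : ℕ}
    {v : Fin r → ∀ j, α j → ℂ} (hv : T = ∑ p, prodTensor (v p)) :
    Submodule.span ℂ (Set.range fun p => v p i) = ⊤ :=
  hT _ fun m => by
    rw [hv, sliceAt_sum]
    exact Submodule.sum_mem _ fun p _ => by
      rw [sliceAt_prodTensor]
      exact Submodule.smul_mem _ _ (Submodule.subset_span ⟨p, rfl⟩)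

theorem hasRankLE_applyAtFactor_sum {r : ℕ} (v : Fin r → ∀ j, α j → ℂ) (i : ι)
    (π : (α i → ℂ) →ₗ[ℂ] (α i → ℂ)) (P : Finset (Fin r)) (hP : ∀ p ∈ P, π (v p i) = 0) :
    HasRankLE (applyAtFactor (∑ p, prodTensor (v p)) i π) (r - P.card) := by
  have hsum : applyAtFactor (∑ p, prodTensor (v p)) i π
      = ∑ p ∈ Finset.univ \ P, prodTensor (Function.update (v p) i (π (v p i))) := by
    rw [applyAtFactor_sum, ← Finset.sum_sdiff (Finset.subset_univ P),
      Finset.sum_eq_zero (s := P) fun p hp => ?_, add_zero]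
    · exact Finset.sum_congr rfl fun p _ => applyAtFactor_prodTensor _ _ _
    · rw [applyAtFactor_prodTensor]
      exact prodTensor_eq_zero (i := i) (by simp [hP p hp])
  have h := hasRankLE_sum (Finset.univ \ P) fun p => Function.update (v p) i (π (v p i))
  rwa [← hsum, Finset.card_sdiff_of_subset (Finset.subset_univ P), Finset.card_univ,
    Fintype.card_fin] at h

end Tensor

theorem substitution_method_general
    {ι : Type} [Fintype ι] [DecidableEq ι] {α : ι → Type} [∀ i, Fintype (α i)]
    (T : (∀ i, α i) → ℂ) (i : ι) (hT : Concise T i)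
    (V' : Submodule ℂ (α i → ℂ)) :
    ∃ π : (α i → ℂ) →ₗ[ℂ] (α i → ℂ),
      LinearMap.range π = V' ∧ (∀ x ∈ V', π x = x) ∧
      tensorRank (applyAtFactor T i π)
          + (Module.finrank ℂ (α i → ℂ) - Module.finrank ℂ V')
        ≤ tensorRank T := by
  obtain ⟨v, hv⟩ := hasRankLE_tensorRank T i
  obtain ⟨π, P, hrange, hfix, hkill, hcard⟩ :=
    V'.exists_proj_vanishing_on_subfamily (fun p => v p i) (hT.span_factor_eq_top hv)
  refine ⟨π, hrange, hfix, ?_⟩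
  have hrank := (hasRankLE_applyAtFactor_sum v i π P hkill).tensorRank_le
  rw [← hv] at hrank
  have hP : P.card ≤ tensorRank T := by simpa using P.card_le_univ
  omega

/-- substitution method: for an `i`-concise tensor `T` and a
proper subspace `V' ⊊ V_i` there is a linear projection `π` of `V_i` onto `V'`
with `rk(T) − rk(π T) ≥ dim V_i − dim V'`. -/
theorem substitution_method
    {ι : Type} [Fintype ι] [DecidableEq ι] {α : ι → Type} [∀ i, Fintype (α i)]
    (T : (∀ i, α i) → ℂ) (i : ι) (hT : Concise T i)
    (V' : Submodule ℂ (α i → ℂ)) (hV' : V' ≠ ⊤) :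
    ∃ π : (α i → ℂ) →ₗ[ℂ] (α i → ℂ),
      LinearMap.range π = V' ∧ (∀ x ∈ V', π x = x) ∧
      tensorRank (applyAtFactor T i π)
          + (Module.finrank ℂ (α i → ℂ) - Module.finrank ℂ V')
        ≤ tensorRank T :=
  substitution_method_general T i hT V'

end QIT
end

section
/- Let n > 2 and let P ∈ V₁⊗⋯⊗Vₙ be a tensor, with d₁ = dim V₁. The following are equivalent: (1) P is persistent; (2) P is 1-concise and there exists a nonzero vector e ∈ V₁ such that ⟨f|P is persistent for every covector f ∈ V₁^∨ with f(e) ≠ 0; (3) P is 1-concise and there exists a nonzero vector e ∈ V₁ such that ⟨f|P is persistent for every covector f ∈ V₁^∨ with f(e) = 1; (4) for every basis e₀,…,e_{d₁−1} of V₁, in the decomposition P = Σ_{j=0}^{d₁−1} e_j⊗P_j all the tensors P_j ∈ V₂⊗⋯⊗Vₙ are nonzero and at least one of them is persistent. -/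
open Module Submodule

section DualSpace

variable {K V : Type*} [Field K] [AddCommGroup V] [Module K V]

theorem forall_apply_ne_zero_iff_forall_apply_eq_one {p : Dual K V → Prop}
    (hp : ∀ (c : K) (f : Dual K V), c ≠ 0 → p f → p (c • f)) (e : V) :
    (∀ f : Dual K V, f e ≠ 0 → p f) ↔ ∀ f : Dual K V, f e = 1 → p f := by
  refine ⟨fun h f hf => h f (by simp [hf]), fun h f hf => ?_⟩
  have hnormalized : p ((f e)⁻¹ • f) := h _ (by simp [inv_mul_cancel₀ hf])
  simpa [smul_smul, mul_inv_cancel₀ hf] using hp (f e) _ hf hnormalized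

variable [FiniteDimensional K V]

theorem Module.Basis.coord_map_evalEquiv_symm_dualBasis {ι : Type*} [Fintype ι] [DecidableEq ι]
    (F : Basis ι K (Dual K V)) (j : ι) :
    (F.dualBasis.map (evalEquiv K V).symm).coord j = F j := by
  refine (F.dualBasis.map (evalEquiv K V).symm).ext fun i => ?_
  rw [Basis.coord_apply, Basis.repr_self, Basis.map_apply, apply_evalEquiv_symm_apply,
    Basis.dualBasis_apply_self, Finsupp.single_apply]
  exact if_congr eq_comm rfl rfl

theorem exists_basis_range_subset_of_linearIndepOn {W ι : Type*} [AddCommGroup W] [Module K W]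
    [FiniteDimensional K W] [Fintype ι] (hι : finrank K W = Fintype.card ι) {s t : Set W}
    (hs : LinearIndepOn K id s) (hst : s ⊆ t) (ht : ⊤ ≤ span K t) :
    ∃ F : Basis ι K W, Set.range F ⊆ t ∧ s ⊆ Set.range F := by
  let F₀ := Basis.extendLe hs hst ht
  have : Fintype (hs.extend hst) := FiniteDimensional.fintypeBasisIndex F₀
  have hcard : Fintype.card (hs.extend hst) = Fintype.card ι := by
    rw [← finrank_eq_card_basis F₀, hι]
  refine ⟨F₀.reindex (Fintype.equivOfCardEq hcard), ?_, ?_⟩ <;> rw [Basis.range_reindex]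
  exacts [Basis.extendLe_subset hs hst ht, Basis.subset_extendLe hs hst ht]

theorem exists_basis_range_coord_subset_of_linearIndepOn {ι : Type*} [Fintype ι]
    (hι : finrank K V = Fintype.card ι) {s t : Set (Dual K V)}
    (hs : LinearIndepOn K id s) (hst : s ⊆ t) (ht : ⊤ ≤ span K t) :
    ∃ b : Basis ι K V, Set.range b.coord ⊆ t ∧ s ⊆ Set.range b.coord := by
  classical
  obtain ⟨F, hFt, hsF⟩ := exists_basis_range_subset_of_linearIndepOn
    (Subspace.dual_finrank_eq.trans hι) hs hst ht
  have hcoord : (F.dualBasis.map (evalEquiv K V).symm).coord = ⇑F :=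
    funext (Basis.coord_map_evalEquiv_symm_dualBasis F)
  exact ⟨_, hcoord ▸ hFt, hcoord ▸ hsF⟩

theorem exists_ne_top_forall_notMem_iff_exists_forall_apply_ne_zero {p : Dual K V → Prop} :
    (∃ S : Submodule K (Dual K V), S ≠ ⊤ ∧ ∀ f ∉ S, p f) ↔
      ∃ e : V, e ≠ 0 ∧ ∀ f : Dual K V, f e ≠ 0 → p f := by
  constructor
  · rintro ⟨S, hS, hp⟩
    have hcoann : S.dualCoannihilator ≠ ⊥ := fun h => hS <| by
      rw [← Subspace.dualCoannihilator_dualAnnihilator_eq (W := S), h, dualAnnihilator_bot]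
    obtain ⟨e, he, he0⟩ := (Submodule.ne_bot_iff _).mp hcoann
    exact ⟨e, he0, fun f hf => hp f fun hfS => hf ((mem_dualCoannihilator e).mp he f hfS)⟩
  · rintro ⟨e, he0, hp⟩
    refine ⟨LinearMap.ker (Dual.eval K V e), fun htop => he0 ?_, fun f hf => hp f hf⟩
    refine (forall_dual_apply_eq_zero_iff K e).mp fun f => ?_
    simpa using htop.ge (mem_top (x := f))

theorem exists_ne_top_forall_notMem_iff_forall_basis_exists_coord {ι : Type*} [Fintype ι]
    (hι : finrank K V = Fintype.card ι) {p : Dual K V → Prop} :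
    (∃ S : Submodule K (Dual K V), S ≠ ⊤ ∧ ∀ f ∉ S, p f) ↔
      ∀ b : Basis ι K V, ∃ j, p (b.coord j) := by
  constructor
  · rintro ⟨S, hS, hp⟩ b
    classical
    by_contra! hcoord
    refine hS (eq_top_iff.mpr ?_)
    rw [← b.dualBasis.span_eq, span_le, Basis.coe_dualBasis]
    rintro _ ⟨j, rfl⟩
    by_contra hj
    exact hcoord j (hp _ hj)
  · intro h
    refine ⟨span K {f | ¬ p f}, fun htop => ?_, fun f hf => by_contra fun hpf => hf ?_⟩
    · obtain ⟨b, hb, -⟩ := exists_basis_range_coord_subset_of_linearIndepOn hι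
        (linearIndepOn_empty K id) (Set.empty_subset _) htop.ge
      obtain ⟨j, hj⟩ := h b
      exact hb ⟨j, rfl⟩ hj
    · exact subset_span hpf

theorem forall_ne_zero_iff_forall_basis_coord {ι : Type*} [Fintype ι]
    (hι : finrank K V = Fintype.card ι) {p : Dual K V → Prop} :
    (∀ g : Dual K V, g ≠ 0 → p g) ↔ ∀ (b : Basis ι K V) (j : ι), p (b.coord j) := by
  refine ⟨fun h b j => h _ fun h0 => by simpa [h0] using b.coord_apply j (b j), fun h g hg => ?_⟩
  obtain ⟨b, -, hg⟩ := exists_basis_range_coord_subset_of_linearIndepOn hι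
    ((linearIndepOn_singleton_iff K).mpr hg) (Set.subset_univ _) (span_univ (R := K)).ge
  obtain ⟨j, rfl⟩ := hg (Set.mem_singleton g)
  exact h b j

end DualSpace

namespace QIT

theorem Concise.smul {ι : Type} [DecidableEq ι] {α : ι → Type} {T : (∀ i, α i) → ℂ} {i : ι}
    (h : Concise T i) {c : ℂ} (hc : c ≠ 0) : Concise (c • T) i :=
  fun V' hV' => h V' fun x => (V'.smul_mem_iff hc).mp (hV' x)

section Contraction

variable {n : ℕ} {α : Fin (n + 1) → Type}

def firstSlice (T : (∀ i, α i) → ℂ) (t : ∀ i : Fin n, α i.succ) : α 0 → ℂ :=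
  fun k => T (Fin.cons k t)

theorem contractFirst_apply (f : (α 0 → ℂ) →ₗ[ℂ] ℂ) (T : (∀ i, α i) → ℂ)
    (t : ∀ i : Fin n, α i.succ) : contractFirst f T t = f (firstSlice T t) := rfl

theorem contractFirst_smul_left (c : ℂ) (f : (α 0 → ℂ) →ₗ[ℂ] ℂ) (T : (∀ i, α i) → ℂ) :
    contractFirst (c • f) T = c • contractFirst f T := rfl

theorem contractFirst_smul_right (c : ℂ) (f : (α 0 → ℂ) →ₗ[ℂ] ℂ) (T : (∀ i, α i) → ℂ) :
    contractFirst f (c • T) = c • contractFirst f T :=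
  funext fun _ => map_smul f c _

theorem sliceAt_zero (T : (∀ i, α i) → ℂ) (x : ∀ i, α i) :
    sliceAt T 0 x = firstSlice T (Fin.tail x) := by
  funext k
  rw [sliceAt, firstSlice, ← Fin.update_cons_zero (x 0) (Fin.tail x) k, Fin.cons_self_tail]

theorem factorIn_zero_iff {T : (∀ i, α i) → ℂ} {V' : Submodule ℂ (α 0 → ℂ)} :
    FactorIn T 0 V' ↔ ∀ t, firstSlice T t ∈ V' := by
  refine ⟨fun h t => ?_, fun h x => sliceAt_zero T x ▸ h _⟩
  rcases isEmpty_or_nonempty (α 0) with hα | ⟨⟨k⟩⟩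
  · exact Subsingleton.elim (0 : α 0 → ℂ) (firstSlice T t) ▸ V'.zero_mem
  · simpa [sliceAt_zero] using h (Fin.cons k t)

theorem concise_zero_iff_contractFirst_ne_zero {T : (∀ i, α i) → ℂ} :
    Concise T 0 ↔ ∀ g : (α 0 → ℂ) →ₗ[ℂ] ℂ, g ≠ 0 → contractFirst g T ≠ 0 := by
  constructor
  · intro hC g hg hgT
    refine hg (LinearMap.ker_eq_top.mp (hC _ (factorIn_zero_iff.mpr fun t => ?_)))
    exact congrFun hgT t
  · intro h V' hV'
    by_contra hne
    obtain ⟨g, hg, hle⟩ := V'.exists_le_ker_of_lt_top (lt_top_iff_ne_top.mpr hne)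
    exact h g hg (funext fun t => hle (factorIn_zero_iff.mp hV' t))

theorem eq_sum_iff_forall_contractFirst_coord_eq [Fintype (α 0)]
    (b : Basis (α 0) ℂ (α 0 → ℂ)) (T : (∀ i, α i) → ℂ)
    (Q : α 0 → ((∀ i : Fin n, α i.succ) → ℂ)) :
    (∀ x : ∀ i, α i, T x = ∑ j, b j (x 0) * Q j (fun i => x i.succ)) ↔
      ∀ j, contractFirst (b.coord j) T = Q j := by
  have hslice : (∀ x : ∀ i, α i, T x = ∑ j, b j (x 0) * Q j (fun i => x i.succ)) ↔
      ∀ t, firstSlice T t = ∑ j, Q j t • b j := by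
    constructor
    · intro h t
      funext k
      simpa [firstSlice, Finset.sum_apply, mul_comm] using h (Fin.cons k t)
    · intro h x
      have hx := congrFun (h (Fin.tail x)) (x 0)
      rw [firstSlice, Fin.cons_self_tail, Finset.sum_apply] at hx
      exact hx.trans (Finset.sum_congr rfl fun j _ => mul_comm _ _)
  have hcoord (t : ∀ i : Fin n, α i.succ) : firstSlice T t = ∑ j, Q j t • b j ↔
      ∀ j, b.coord j (firstSlice T t) = Q j t := by
    rw [← b.equivFun_symm_apply, LinearEquiv.eq_symm_apply, funext_iff]
    simp only [Basis.equivFun_apply, Basis.coord_apply]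
  simp only [hslice, hcoord, contractFirst_apply, funext_iff]
  exact forall_comm

end Contraction

theorem Persistent.smul : ∀ {n : ℕ} {α : Fin n → Type} {T : (∀ i, α i) → ℂ},
    Persistent T → ∀ {c : ℂ}, c ≠ 0 → Persistent (c • T)
  | 0, _, _, h, _, _ => h.elim
  | 1, _, _, h, _, _ => h.elim
  | 2, _, _, h, _, hc => Concise.smul h hc
  | _ + 3, _, _, ⟨hC, S, hS, hf⟩, _, hc => ⟨hC.smul hc, S, hS, fun f hfS => by
      rw [contractFirst_smul_right]
      exact (hf f hfS).smul hc⟩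

/-- equivalent characterizations of persistence for an
`n`-partite tensor with `n = m + 3 > 2`. -/
theorem persistent_characterizations
    {m : ℕ} {α : Fin (m + 3) → Type} [∀ i, Fintype (α i)]
    (P : (∀ i, α i) → ℂ) :
    (Persistent P ↔
      (Concise P 0 ∧ ∃ e : α 0 → ℂ, e ≠ 0 ∧
        ∀ f : (α 0 → ℂ) →ₗ[ℂ] ℂ, f e ≠ 0 → Persistent (contractFirst f P))) ∧
    (Persistent P ↔
      (Concise P 0 ∧ ∃ e : α 0 → ℂ, e ≠ 0 ∧
        ∀ f : (α 0 → ℂ) →ₗ[ℂ] ℂ, f e = 1 → Persistent (contractFirst f P))) ∧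
    (Persistent P ↔
      (∀ (b : Module.Basis (α 0) ℂ (α 0 → ℂ)) (Q : α 0 → ((∀ i : Fin (m + 2), α i.succ) → ℂ)),
        (∀ x : ∀ i, α i, P x = ∑ j, b j (x 0) * Q j (fun i => x i.succ)) →
        ((∀ j, Q j ≠ 0) ∧ ∃ j, Persistent (Q j)))) := by
  have hcard : finrank ℂ (α 0 → ℂ) = Fintype.card (α 0) := finrank_fintype_fun_eq_card ℂ
  have hscale (c : ℂ) (f : (α 0 → ℂ) →ₗ[ℂ] ℂ) (hc : c ≠ 0)
      (hf : Persistent (contractFirst f P)) : Persistent (contractFirst (c • f) P) :=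
    contractFirst_smul_left c f P ▸ hf.smul hc
  have h₁₂ : Persistent P ↔ Concise P 0 ∧ ∃ e : α 0 → ℂ, e ≠ 0 ∧
      ∀ f : (α 0 → ℂ) →ₗ[ℂ] ℂ, f e ≠ 0 → Persistent (contractFirst f P) :=
    and_congr_right' exists_ne_top_forall_notMem_iff_exists_forall_apply_ne_zero
  refine ⟨h₁₂, ?_, ?_⟩
  · simp only [h₁₂, forall_apply_ne_zero_iff_forall_apply_eq_one hscale]
  · simp only [eq_sum_iff_forall_contractFirst_coord_eq]
    simp only [← funext_iff, forall_eq', forall_and]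
    exact and_congr
      (concise_zero_iff_contractFirst_ne_zero.trans (forall_ne_zero_iff_forall_basis_coord hcard))
      (exists_ne_top_forall_notMem_iff_forall_basis_exists_coord hcard)

end QIT
end

section
/- For every n ≥ 2, the tensor rank of the n-qubit W state equals n: rk(W_n) = n. -/
namespace QIT

/-! The upper bound is the defining decomposition of `W_n` into `n` basis tensors. For the
lower bound we show, by induction on `n`, that `W_n + c|0⋯0⟩` has rank at least `n` for
every `c` (the term `Pi.single 0 c`). This is the substitution method: if
`T = Σ_{p ≤ r+1} v_p ⊗ Q_p` and `⟨g|T ≠ 0`, some `g(v_{p₀}) ≠ 0`, and for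
`c = -f(v_{p₀}) / g(v_{p₀})` the contraction `⟨f + c g|T` loses the summand `p₀`, so it has
rank at most `r`. Contracting the first factor of `W_{n+1} + c|0⋯0⟩` with `⟨0| + t⟨1|` gives
`W_n + (c + t)|0⋯0⟩`, and `⟨1|` gives `|0⋯0⟩ ≠ 0`. -/

section RankBounds

variable {ι : Type} [Fintype ι] {α : ι → Type}

theorem hasRankLE_zero_iff {T : (∀ i, α i) → ℂ} : HasRankLE T 0 ↔ T = 0 := by
  simp [HasRankLE]

theorem prodTensor_mul_factors (a : ι → ℂ) (v : ∀ i, α i → ℂ) :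
    prodTensor (fun i k => a i * v i k) = (∏ i, a i) • prodTensor v := by
  funext j
  simp [prodTensor, Finset.prod_mul_distrib]

theorem hasRankLE_sum_smul_prodTensor [Nonempty ι] {r : ℕ} (a : Fin r → ℂ)
    (v : Fin r → ∀ i, α i → ℂ) : HasRankLE (∑ p, a p • prodTensor (v p)) r := by
  classical
  let i₀ : ι := Classical.arbitrary ι
  refine ⟨fun p i k => (Pi.mulSingle i₀ (a p) : ι → ℂ) i * v p i k, ?_⟩
  simp only [prodTensor_mul_factors, Finset.prod_pi_mulSingle', Finset.mem_univ, if_true]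

theorem prodTensor_single_one [∀ i, DecidableEq (α i)] (j : ∀ i, α i) :
    prodTensor (fun i => Pi.single (j i) 1) = Pi.single j (1 : ℂ) := by
  funext m
  simp [prodTensor, Pi.single_apply, Finset.prod_ite_zero, funext_iff, eq_comm]

end RankBounds

section Substitution

variable {n : ℕ} {α : Fin (n + 1) → Type}

theorem prodTensor_cons (v : ∀ i, α i → ℂ) (k : α 0) (m : ∀ i : Fin n, α i.succ) :
    prodTensor v (Fin.cons k m) = v 0 k * prodTensor (fun i : Fin n => v i.succ) m := by
  simp [prodTensor, Fin.prod_univ_succ]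

theorem contractFirst_prodTensor (f : (α 0 → ℂ) →ₗ[ℂ] ℂ) (v : ∀ i, α i → ℂ) :
    contractFirst f (prodTensor v) = f (v 0) • prodTensor (fun i : Fin n => v i.succ) := by
  funext m
  have : (fun k => prodTensor v (Fin.cons k m)) =
      prodTensor (fun i : Fin n => v i.succ) m • v 0 := by
    funext k
    simp [prodTensor_cons, mul_comm]
  simp [contractFirst, this, mul_comm]

theorem contractFirst_sum {r : ℕ} (f : (α 0 → ℂ) →ₗ[ℂ] ℂ) (T : Fin r → (∀ i, α i) → ℂ) :
    contractFirst f (∑ p, T p) = ∑ p, contractFirst f (T p) := by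
  funext m
  simp only [contractFirst, Finset.sum_apply]
  rw [← map_sum]
  congr 1
  funext k
  simp

theorem contractFirst_add_smul (f g : (α 0 → ℂ) →ₗ[ℂ] ℂ) (c : ℂ) (T : (∀ i, α i) → ℂ) :
    contractFirst (f + c • g) T = contractFirst f T + c • contractFirst g T := by
  funext m
  simp [contractFirst]

theorem HasRankLE.exists_contractFirst_add_smul [NeZero n] {r : ℕ} {T : (∀ i, α i) → ℂ}
    (hT : HasRankLE T (r + 1)) (f g : (α 0 → ℂ) →ₗ[ℂ] ℂ) (hg : contractFirst g T ≠ 0) :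
    ∃ c : ℂ, HasRankLE (contractFirst (f + c • g) T) r := by
  obtain ⟨v, rfl⟩ := hT
  set Q : Fin (r + 1) → (∀ i : Fin n, α i.succ) → ℂ := fun p => prodTensor fun i => v p i.succ
  have hcontract : ∀ h : (α 0 → ℂ) →ₗ[ℂ] ℂ,
      contractFirst h (∑ p, prodTensor (v p)) = ∑ p, h (v p 0) • Q p := fun h => by
    simp only [contractFirst_sum, contractFirst_prodTensor, Q]
  obtain ⟨p₀, hp₀⟩ : ∃ p₀, g (v p₀ 0) ≠ 0 := by
    by_contra! hzero
    exact hg (by simp [hcontract, hzero])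
  refine ⟨-f (v p₀ 0) / g (v p₀ 0), ?_⟩
  have hkill : (f + (-f (v p₀ 0) / g (v p₀ 0)) • g) (v p₀ 0) = 0 := by
    simp [div_mul_cancel₀ _ hp₀]
  rw [hcontract, Fin.sum_univ_succAbove _ p₀, hkill, zero_smul, zero_add]
  exact hasRankLE_sum_smul_prodTensor _ _

end Substitution

section WState

theorem sum_val_eq_one_iff {n : ℕ} (m : Fin n → Fin 2) :
    ∑ i, (m i : ℕ) = 1 ↔ ∃ p, m = Pi.single p 1 := by
  constructor
  · intro hsum
    obtain ⟨p, -, hp⟩ := Finset.exists_ne_zero_of_sum_ne_zero (hsum ▸ one_ne_zero)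
    have hmp : m p = 1 := by omega
    have hrest : ∑ i ∈ Finset.univ.erase p, (m i : ℕ) = 0 := by
      have := Finset.add_sum_erase Finset.univ (fun i => (m i : ℕ)) (Finset.mem_univ p)
      simp only [hmp, Fin.isValue, Fin.val_one] at this
      omega
    refine ⟨p, funext fun i => ?_⟩
    rcases eq_or_ne i p with rfl | hip
    · simpa using hmp
    · have := Finset.sum_eq_zero_iff.1 hrest i (by simpa using hip)
      simp [hip, Fin.ext_iff, this]
  · rintro ⟨p, rfl⟩
    simp [Pi.single_apply, apply_ite Fin.val]

theorem Wstate_eq_sum_single (n : ℕ) :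
    Wstate n = ∑ p : Fin n, Pi.single (Pi.single p 1) 1 := by
  funext m
  simp only [Wstate, Finset.sum_apply, sum_val_eq_one_iff]
  by_cases h : ∃ p, m = Pi.single p 1
  · obtain ⟨p, rfl⟩ := h
    have hne : ∀ q ≠ p, (Pi.single p 1 : Fin n → Fin 2) ≠ Pi.single q 1 := fun q hqp h => by
      simpa [Pi.single_apply, hqp] using congrFun h q
    rw [if_pos ⟨p, rfl⟩, Finset.sum_eq_single p (fun q _ hqp => Pi.single_eq_of_ne (hne q hqp) _)
      (by simp)]
    simp
  · push Not at h
    simp [h]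

theorem hasRankLE_Wstate (n : ℕ) : HasRankLE (Wstate n) n :=
  ⟨fun p i => Pi.single ((Pi.single p 1 : Fin n → Fin 2) i) 1, by
    simp only [prodTensor_single_one, Wstate_eq_sum_single]⟩

theorem Wstate_succ_cons_zero {n : ℕ} (m : Fin n → Fin 2) :
    Wstate (n + 1) (Fin.cons 0 m) = Wstate n m := by
  simp [Wstate, Fin.sum_univ_succ]

theorem Wstate_succ_cons_one {n : ℕ} (m : Fin n → Fin 2) :
    Wstate (n + 1) (Fin.cons 1 m) = (Pi.single 0 1 : (Fin n → Fin 2) → ℂ) m := by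
  simp [Wstate, Fin.sum_univ_succ, Pi.single_apply, funext_iff, Finset.sum_eq_zero_iff]

theorem contractFirst_proj_zero_Wstate_add_single {n : ℕ} (c : ℂ) :
    contractFirst (LinearMap.proj 0) (Wstate (n + 1) + Pi.single 0 c) =
      Wstate n + Pi.single 0 c := by
  funext m
  simp [contractFirst, Wstate_succ_cons_zero, Pi.single_apply, funext_iff, Fin.forall_fin_succ]

theorem contractFirst_proj_one_Wstate_add_single {n : ℕ} (c : ℂ) :
    contractFirst (LinearMap.proj 1) (Wstate (n + 1) + Pi.single 0 c) = Pi.single 0 1 := by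
  funext m
  simp [contractFirst, Wstate_succ_cons_one, Pi.single_apply, funext_iff, Fin.forall_fin_succ]

theorem le_of_hasRankLE_Wstate_add_single {n r : ℕ} {c : ℂ}
    (h : HasRankLE (Wstate n + Pi.single 0 c) r) : n ≤ r := by
  induction n generalizing c r with
  | zero => exact r.zero_le
  | succ n ih =>
    have hslice_ne : contractFirst (LinearMap.proj 1) (Wstate (n + 1) + Pi.single 0 c) ≠ 0 := by
      simp [contractFirst_proj_one_Wstate_add_single]
    obtain ⟨s, rfl⟩ : ∃ s, r = s + 1 := Nat.exists_eq_succ_of_ne_zero <| by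
      rintro rfl
      rw [hasRankLE_zero_iff.1 h] at hslice_ne
      exact hslice_ne (funext fun m => by simp [contractFirst])
    rcases Nat.eq_zero_or_pos n with rfl | hn
    · exact Nat.succ_le_succ s.zero_le
    have : NeZero n := ⟨hn.ne'⟩
    obtain ⟨t, ht⟩ :=
      h.exists_contractFirst_add_smul (LinearMap.proj 0) (LinearMap.proj 1) hslice_ne
    rw [contractFirst_add_smul, contractFirst_proj_zero_Wstate_add_single,
      contractFirst_proj_one_Wstate_add_single, add_assoc, ← Pi.single_smul, smul_eq_mul, mul_one,
      ← Pi.single_add] at ht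
    exact Nat.succ_le_succ (ih ht)

end WState

theorem W_tensorRank_general (n : ℕ) : tensorRank (Wstate n) = n := by
  refine le_antisymm (Nat.sInf_le (hasRankLE_Wstate n)) (le_csInf ⟨n, hasRankLE_Wstate n⟩ ?_)
  intro r hr
  exact le_of_hasRankLE_Wstate_add_single (c := 0) (by simpa using hr)

/-- the tensor rank of the `n`-qubit W state is `n`. -/
theorem W_tensorRank (n : ℕ) (hn : 2 ≤ n) : tensorRank (Wstate n) = n :=
  W_tensorRank_general n

end QIT
end

section
/- Let d ≥ 2, n ≥ 2, and let T ∈ (ℂ^d)^{⊗n} be a tensor of the form T = Σ_{j₁+⋯+jₙ < d} t_{j₁⋯jₙ} |j₁⟩⊗⋯⊗|jₙ⟩, i.e., all coefficients of T in the standard product basis vanish on multi-indices (j₁,…,jₙ) with j₁+⋯+jₙ ≥ d. If the coefficient of |0⟩^{⊗(n−i−2)}⊗|j⟩⊗|0⟩^{⊗i}⊗|d−j−1⟩ is nonzero for all 0 ≤ i ≤ n−2 and 0 ≤ j ≤ d−1, then T is a persistent tensor. -/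
/-!
Write `e(p, j) = |0⟩^{⊗p} |j⟩ |0⟩^{⊗(n-p-2)} |d-1-j⟩` (in Lean `Fin.snoc (Pi.single p j) j.rev`),
a multi-index whose entries sum to `d - 1`. Conciseness in the first factor: the slices of `T`
through `e(0, j)`, `j < d`, form a lower triangular matrix with nonzero diagonal, since `T`
vanishes once the entries sum to `d`. Persistence: take `S = {f | f |0⟩ = 0}`. On a multi-index
of entry sum `d - 1` only the `|0⟩` component of the first factor survives the contraction, so
`⟨f|T` has coefficient `f |0⟩ · T(0, e(p, j)) = f |0⟩ · T(e(p + 1, j)) ≠ 0` at `e(p, j)`, and it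
still has pyramidal support; induct on `n`.
-/

theorem Matrix.span_rows_eq_top_of_isLowerTriangular {K ι : Type*} [Field K] [Fintype ι]
    [LinearOrder ι] {A : Matrix ι ι K} (hA : A.IsLowerTriangular) (hdiag : ∀ i, A i i ≠ 0) :
    Submodule.span K (Set.range fun i => A i) = ⊤ := by
  have hdet : A.det ≠ 0 := by
    rw [Matrix.det_of_isLowerTriangular A hA]
    exact Finset.prod_ne_zero_iff.2 fun i _ => hdiag i
  exact (Matrix.linearIndependent_rows_of_det_ne_zero hdet).span_eq_top_of_card_eq_finrank'
    (by simp)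

theorem Fin.cons_zero_pi_single {n : ℕ} {β : Type*} [Zero β] (p : Fin n) (b : β) :
    (Fin.cons 0 (Pi.single p b) : Fin (n + 1) → β) = Pi.single p.succ b := by
  ext i
  cases i using Fin.cases <;> simp [Pi.single_apply]

namespace QIT

def HasPyramidalSupport {n d : ℕ} (T : (Fin n → Fin d) → ℂ) : Prop :=
  ∀ m : Fin n → Fin d, d ≤ ∑ i, (m i : ℕ) → T m = 0

section MultiIndex

variable {n d : ℕ}

theorem sum_val_cons (k : Fin d) (m : Fin n → Fin d) :
    ∑ i, ((Fin.cons k m : Fin (n + 1) → Fin d) i : ℕ) = k + ∑ i, (m i : ℕ) := by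
  simp [Fin.sum_univ_succ]

theorem sum_val_snoc_pi_single [NeZero d] (p : Fin n) (j r : Fin d) :
    ∑ i, ((Fin.snoc (Pi.single p j) r : Fin (n + 1) → Fin d) i : ℕ) = j + r := by
  rw [Fin.sum_univ_castSucc, Finset.sum_eq_single p]
  · simp
  · intro i _ hi
    simp [hi]
  · simp

end MultiIndex

theorem concise_zero_of_hasPyramidalSupport {n d : ℕ} [NeZero d] {T : (Fin (n + 2) → Fin d) → ℂ}
    (hT : HasPyramidalSupport T) (hnz : ∀ j : Fin d, T (Fin.snoc (Pi.single 0 j) j.rev) ≠ 0) :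
    Concise T 0 := by
  intro V hV
  let A : Matrix (Fin d) (Fin d) ℂ := fun j => sliceAt T 0 (Fin.snoc (Pi.single 0 j) j.rev)
  have hA : ∀ j k, A j k = T (Fin.snoc (Pi.single 0 k) j.rev) := by
    intro j k
    show T (Function.update _ (Fin.castSucc 0) k) = _
    rw [← Fin.snoc_update]
    simp [Pi.single]
  have hlower : A.IsLowerTriangular := by
    intro j k hjk
    rw [hA]
    apply hT
    rw [sum_val_snoc_pi_single, Fin.val_rev]
    have : (j : ℕ) < k := hjk
    omega
  have hspan := Matrix.span_rows_eq_top_of_isLowerTriangular hlower fun j => hA j j ▸ hnz j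
  rw [eq_top_iff, ← hspan, Submodule.span_le]
  rintro _ ⟨j, rfl⟩
  exact hV _

section Contraction

variable {n d : ℕ} (f : (Fin d → ℂ) →ₗ[ℂ] ℂ) {T : (Fin (n + 1) → Fin d) → ℂ}

theorem contractFirst_apply_eq_sum (m : Fin n → Fin d) :
    contractFirst f T m = ∑ k, f (Pi.single k 1) * T (Fin.cons k m) := by
  rw [contractFirst, LinearMap.pi_apply_eq_sum_univ f]
  refine Finset.sum_congr rfl fun k _ => ?_
  rw [smul_eq_mul, mul_comm]
  congr
  ext j
  simp [Pi.single_apply, eq_comm]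

theorem hasPyramidalSupport_contractFirst (hT : HasPyramidalSupport T) :
    HasPyramidalSupport (contractFirst f T) := by
  intro m hm
  rw [contractFirst_apply_eq_sum]
  refine Finset.sum_eq_zero fun k _ => ?_
  rw [hT _ (by rw [sum_val_cons]; omega), mul_zero]

theorem contractFirst_apply_of_sum_eq [NeZero d] (hT : HasPyramidalSupport T)
    {m : Fin n → Fin d} (hm : ∑ i, (m i : ℕ) = d - 1) :
    contractFirst f T m = f (Pi.single 0 1) * T (Fin.cons 0 m) := by
  rw [contractFirst_apply_eq_sum, Finset.sum_eq_single 0]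
  · intro k _ hk
    have : 0 < (k : ℕ) := Fin.pos_iff_ne_zero.2 hk
    rw [hT _ (by rw [sum_val_cons]; omega), mul_zero]
  · simp

end Contraction

theorem persistent_of_hasPyramidalSupport {d : ℕ} [NeZero d] :
    ∀ {n : ℕ} {T : (Fin (n + 2) → Fin d) → ℂ}, HasPyramidalSupport T →
      (∀ p j, T (Fin.snoc (Pi.single p j) j.rev) ≠ 0) → Persistent T
  | 0, _, hT, hnz => concise_zero_of_hasPyramidalSupport hT (hnz 0)
  | n + 1, T, hT, hnz => by
    refine ⟨concise_zero_of_hasPyramidalSupport hT (hnz 0),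
      LinearMap.ker (LinearMap.applyₗ (Pi.single 0 1)), ?_, fun f hf => ?_⟩
    · rw [Ne, eq_top_iff]
      intro h
      simpa using h (Submodule.mem_top (x := LinearMap.proj 0))
    · refine persistent_of_hasPyramidalSupport (hasPyramidalSupport_contractFirst f hT)
        fun p j => ?_
      have hsum : ∑ i, ((Fin.snoc (Pi.single p j) j.rev : Fin (n + 2) → Fin d) i : ℕ) = d - 1 := by
        rw [sum_val_snoc_pi_single, Fin.val_rev]
        omega
      rw [contractFirst_apply_of_sum_eq f hT hsum, Fin.cons_snoc_eq_snoc_cons,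
        Fin.cons_zero_pi_single]
      exact mul_ne_zero hf (hnz p.succ j)

/-- a tensor `T ∈ (ℂ^d)^{⊗n}` supported on multi-indices with
entry sum `< d`, whose coefficients on all the basis vectors
`|0⟩^{⊗(n-i-2)} |j⟩ |0⟩^{⊗i} |d-j-1⟩` are nonzero, is persistent. -/
theorem persistent_of_pyramidal_support
    (d n : ℕ) (hd : 2 ≤ d) (hn : 2 ≤ n)
    (T : (Fin n → Fin d) → ℂ)
    (hvanish : ∀ m : Fin n → Fin d, d ≤ ∑ i, (m i : ℕ) → T m = 0)
    (hnz : ∀ (i j : ℕ) (hi : i ≤ n - 2) (hj : j ≤ d - 1),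
      T (fun k : Fin n =>
          if (k : ℕ) = n - i - 2 then ⟨j, by omega⟩
          else if (k : ℕ) = n - 1 then ⟨d - 1 - j, by omega⟩
          else ⟨0, by omega⟩) ≠ 0) :
    Persistent T := by
  have : NeZero d := ⟨by omega⟩
  obtain ⟨n, rfl⟩ : ∃ m, n = m + 2 := ⟨n - 2, by omega⟩
  refine persistent_of_hasPyramidalSupport hvanish fun p j => ?_
  convert hnz (n - p) j (by omega) (by omega) using 2
  ext k
  cases k using Fin.lastCases with
  | last =>
    simp only [Fin.snoc_last, Fin.val_last, Fin.val_rev,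
      if_neg (show n + 1 ≠ n + 2 - (n - p) - 2 by omega), if_pos (show n + 1 = n + 2 - 1 by omega)]
    omega
  | cast k =>
    have := k.isLt
    simp only [Fin.snoc_castSucc, Pi.single_apply, Fin.ext_iff, Fin.val_castSucc]
    split_ifs <;> simp <;> omega

end QIT
end

section
/- For all d ≥ 2 and n ≥ 2, the tensor rank of the n-qudit L state equals (n−1)(d−1)+1: rk(L(d,n)) = (n−1)(d−1)+1. -/
namespace QIT

open Finset in
private lemma hasRankLE_of_finset {ι : Type} [Fintype ι] {α : ι → Type} {r : ℕ}
    (v : Fin r → ∀ i, α i → ℂ) (s : Finset (Fin r)) {T : (∀ i, α i) → ℂ}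
    (hT : T = ∑ p ∈ s, prodTensor (v p)) : HasRankLE T s.card := by
  refine ⟨fun q => v (s.equivFin.symm q), ?_⟩
  rw [hT, ← Finset.sum_coe_sort s fun p => prodTensor (v p)]
  exact (Equiv.sum_comp s.equivFin.symm fun x : {x // x ∈ s} => prodTensor (v x.1)).symm

open Finset in
private lemma upper_bound (d n : ℕ) (hd : 2 ≤ d) (hn : 2 ≤ n) :
    HasRankLE (Lstate d n) ((n - 1) * (d - 1) + 1) := by
  haveI : NeZero n := ⟨by omega⟩
  set r := (n - 1) * (d - 1) + 1 with hrdef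
  have hrpos : 0 < r := Nat.succ_pos _
  have hrC : (r : ℂ) ≠ 0 := Nat.cast_ne_zero.mpr (by omega)
  set ζ := Complex.exp (2 * Real.pi * Complex.I / r) with hζdef
  have hζ : IsPrimitiveRoot ζ r := Complex.isPrimitiveRoot_exp r (by omega)
  have hζ1 : ζ ^ r = 1 := hζ.pow_eq_one
  have hζ0 : ζ ≠ 0 := hζ.ne_zero (by omega)
  -- key: distinct powers below r are distinct
  have key : ∀ b c : ℕ, b < c → c - b < r → ζ ^ b ≠ ζ ^ c := by
    intro b c hbc hlt h
    have h2 : ζ ^ b * ζ ^ (c - b) = ζ ^ b * 1 := by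
      rw [← pow_add, Nat.add_sub_cancel' hbc.le, mul_one, ← h]
    have h3 : ζ ^ (c - b) = 1 := by
      exact mul_left_cancel₀ (pow_ne_zero _ hζ0) h2
    have h4 : r ∣ c - b := (hζ.pow_eq_one_iff_dvd _).mp h3
    have : c - b = 0 := Nat.eq_zero_of_dvd_of_lt h4 hlt
    omega
  refine ⟨fun p i k => (if i = (0 : Fin n) then ((r : ℂ))⁻¹ * (ζ ^ ((p : ℕ) * (d - 1)))⁻¹ else 1)
      * ζ ^ ((p : ℕ) * (k : ℕ)), ?_⟩
  funext m
  set a := ∑ i, ((m i : ℕ)) with hadef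
  have ha_le : a ≤ n * (d - 1) := by
    rw [hadef]
    calc ∑ i, ((m i : ℕ)) ≤ ∑ _i : Fin n, (d - 1) :=
          Finset.sum_le_sum fun i _ => by have := (m i).isLt; omega
      _ = n * (d - 1) := by simp [Finset.sum_const, mul_comm]
  have hsum : ∀ p : Fin r, prodTensor
      (fun (i : Fin n) (k : Fin d) => (if i = (0 : Fin n) then ((r : ℂ))⁻¹ * (ζ ^ ((p : ℕ) * (d - 1)))⁻¹ else 1)
        * ζ ^ ((p : ℕ) * (k : ℕ))) m
      = (r : ℂ)⁻¹ * (ζ ^ a * (ζ ^ (d - 1))⁻¹) ^ (p : ℕ) := by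
    intro p
    unfold prodTensor
    rw [Finset.prod_mul_distrib, Finset.prod_ite_eq', Finset.prod_pow_eq_pow_sum]
    have h1 : ∑ i, (p : ℕ) * ((m i : ℕ)) = (p : ℕ) * a := by rw [hadef, Finset.mul_sum]
    rw [h1]
    simp only [Finset.mem_univ, if_true]
    rw [mul_pow, inv_pow, ← pow_mul, ← pow_mul, Nat.mul_comm (a) (p : ℕ), Nat.mul_comm (d-1) (p:ℕ)]
    ring
  rw [Finset.sum_apply]
  simp only [hsum]
  rw [← Finset.mul_sum]
  set w := ζ ^ a * (ζ ^ (d - 1))⁻¹ with hwdef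
  have hwr : w ^ r = 1 := by
    rw [hwdef, mul_pow, inv_pow, ← pow_mul, ← pow_mul, Nat.mul_comm a r, Nat.mul_comm (d-1) r,
      pow_mul, pow_mul, hζ1, one_pow, one_pow, inv_one, mul_one]
  have hsum2 : ∑ p : Fin r, w ^ (p : ℕ) = ∑ p ∈ Finset.range r, w ^ p :=
    Fin.sum_univ_eq_sum_range _ _
  rw [hsum2]
  by_cases hcase : a = d - 1
  · have hw1 : w = 1 := by rw [hwdef, hcase, mul_inv_cancel₀ (pow_ne_zero _ hζ0)]
    rw [hw1]
    simp [Lstate, hcase, ← hadef, hrC]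
  · have hw1 : w ≠ 1 := by
      intro h
      have heq : ζ ^ a = ζ ^ (d - 1) := by
        have := congrArg (· * ζ ^ (d - 1)) h
        simp only [hwdef] at this
        rwa [mul_assoc, inv_mul_cancel₀ (pow_ne_zero _ hζ0), mul_one, one_mul] at this
      have hfacts : (n - 1) * (d - 1) + (d - 1) = n * (d - 1) := by
        cases n with
        | zero => omega
        | succ k => simp [Nat.succ_sub_one, Nat.succ_mul]
      have h2e : 2 * (d - 1) ≤ n * (d - 1) := Nat.mul_le_mul_right _ hn
      rcases Nat.lt_or_ge a (d - 1) with hlt | hge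
      · exact key a (d - 1) hlt (by omega) heq
      · have : d - 1 < a := by omega
        exact key (d - 1) a this (by omega) heq.symm
    rw [geom_sum_eq hw1, hwr]
    simp [Lstate, hcase, ← hadef]
open Finset in
private lemma lower_inner (d n : ℕ) (hd : 2 ≤ d)
    (IH : ∀ S : (Fin (n + 1) → Fin d) → ℂ,
      (∀ m : Fin (n + 1) → Fin d, d - 1 ≤ ∑ i, (m i : ℕ) →
        S m = if (∑ i, (m i : ℕ)) = d - 1 then 1 else 0) →
      ∀ r : ℕ, HasRankLE S r → n * (d - 1) + 1 ≤ r) :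
    ∀ s : ℕ, 1 ≤ s → s ≤ d →
      ∀ T : (Fin (n + 2) → Fin d) → ℂ,
        (∀ m : Fin (n + 2) → Fin d, s ≤ (m 0 : ℕ) → T m = 0) →
        (∀ m : Fin (n + 2) → Fin d, (m 0 : ℕ) < s → d - 1 ≤ ∑ i, (m i : ℕ) →
          T m = if (∑ i, (m i : ℕ)) = d - 1 then 1 else 0) →
        ∀ r : ℕ, HasRankLE T r → (s - 1) + (n * (d - 1) + 1) ≤ r := by
  intro s hs
  induction s, hs using Nat.le_induction with
  | base =>
    intro _hsd T h0 h1 r hr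
    obtain ⟨v, hv⟩ := hr
    set z : Fin d := ⟨0, by omega⟩ with hz
    obtain ⟨S, hS⟩ : ∃ S : (Fin (n + 1) → Fin d) → ℂ, ∀ rest, S rest = T (Fin.cons z rest) :=
      ⟨fun rest => T (Fin.cons z rest), fun _ => rfl⟩
    have hprod : ∀ (p : Fin r) (rest : Fin (n + 1) → Fin d),
        prodTensor (v p) (Fin.cons z rest)
          = prodTensor (fun (i : Fin (n + 1)) (k : Fin d) =>
              (if i = 0 then v p 0 z else 1) * v p i.succ k) rest := by
      intro p rest
      unfold prodTensor
      rw [Fin.prod_univ_succ, Finset.prod_mul_distrib, Finset.prod_ite_eq']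
      simp [Fin.cons_zero, Fin.cons_succ]
    have hSrank : HasRankLE S r := by
      refine ⟨fun p (i : Fin (n + 1)) (k : Fin d) =>
        (if i = 0 then v p 0 z else 1) * v p i.succ k, ?_⟩
      funext rest
      rw [hS rest]
      simp only [hv, Finset.sum_apply]
      exact Finset.sum_congr rfl fun p _ => hprod p rest
    have hShyp : ∀ rest : Fin (n + 1) → Fin d, d - 1 ≤ ∑ i, (rest i : ℕ) →
        S rest = if (∑ i, (rest i : ℕ)) = d - 1 then 1 else 0 := by
      intro rest hle
      have hsum : ∑ i, ((Fin.cons z rest : Fin (n+2) → Fin d) i : ℕ) = ∑ i, (rest i : ℕ) := by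
        rw [Fin.sum_univ_succ]
        simp [hz]
      rw [hS rest, h1 (Fin.cons z rest) (by simp [hz]) (by rw [hsum]; exact hle), hsum]
    simpa using IH S hShyp r hSrank
  | succ s hs ihs =>
    intro hsd T h0 h1 r hr
    obtain ⟨v, hv⟩ := hr
    have hTapp : ∀ m, T m = ∑ p : Fin r, prodTensor (v p) m := by
      intro m; rw [hv]; exact Finset.sum_apply _ _ _
    set z : Fin d := ⟨0, by omega⟩ with hz
    set top : Fin d := ⟨s, by omega⟩ with htop
    -- a point where T is 1
    set m1 : Fin (n + 2) → Fin d :=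
      Fin.cons top (Fin.cons ⟨d - 1 - s, by omega⟩ (fun _ => z)) with hm1
    have hm1sum : ∑ i, ((m1 i : ℕ)) = d - 1 := by
      rw [hm1, Fin.sum_univ_succ, Fin.sum_univ_succ]
      simp [htop, hz]
      omega
    have hT1 : T m1 = 1 := by
      rw [h1 m1 (by simp [hm1, htop]) (by rw [hm1sum]), hm1sum]
      simp
    have hrpos : 1 ≤ r := by
      by_contra hc
      have : r = 0 := by omega
      subst this
      rw [hTapp m1] at hT1
      simp at hT1
    have hex : ∃ p : Fin r, v p 0 top ≠ 0 := by
      by_contra hc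
      push_neg at hc
      rw [hTapp m1] at hT1
      have : ∀ p : Fin r, prodTensor (v p) m1 = 0 := by
        intro p
        apply Finset.prod_eq_zero (Finset.mem_univ (0 : Fin (n + 2)))
        have : m1 0 = top := by simp [hm1]
        rw [this, hc p]
      rw [Finset.sum_congr rfl fun p _ => this p] at hT1
      simp at hT1
    obtain ⟨p0, hp0⟩ := hex
    obtain ⟨c, hc⟩ : ∃ c : Fin d → ℂ, ∀ k, c k = v p0 0 k / v p0 0 top :=
      ⟨fun k => v p0 0 k / v p0 0 top, fun _ => rfl⟩
    obtain ⟨T', hT'⟩ : ∃ T' : (Fin (n + 2) → Fin d) → ℂ, ∀ m, T' m =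
        if (m 0 : ℕ) < s then T m - c (m 0) * T (Function.update m 0 top) else 0 :=
      ⟨fun m => _, fun _ => rfl⟩
    obtain ⟨w, hw⟩ : ∃ w : Fin r → ∀ _ : Fin (n + 2), Fin d → ℂ, ∀ p i k, w p i k =
        if i = 0 then (if (k : ℕ) < s then v p 0 k - c k * v p 0 top else 0) else v p i k :=
      ⟨fun p i k => _, fun _ _ _ => rfl⟩
    have hupd : ∀ (m : Fin (n + 2) → Fin d) (i : Fin (n + 1)),
        Function.update m 0 top i.succ = m i.succ := fun m i =>
      Function.update_of_ne (Fin.succ_ne_zero i) _ _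
    have hwprod : ∀ (p : Fin r) (m : Fin (n + 2) → Fin d),
        prodTensor (w p) m =
          (if (m 0 : ℕ) < s then v p 0 (m 0) - c (m 0) * v p 0 top else 0)
            * ∏ i : Fin (n + 1), v p i.succ (m i.succ) := by
      intro p m
      unfold prodTensor
      rw [Fin.prod_univ_succ]
      congr 1
      · rw [hw p 0 (m 0), if_pos rfl]
      · exact Finset.prod_congr rfl fun i _ => by
          rw [hw p i.succ (m i.succ), if_neg (Fin.succ_ne_zero i)]
    have hvprod : ∀ (p : Fin r) (m : Fin (n + 2) → Fin d),
        prodTensor (v p) m = v p 0 (m 0) * ∏ i : Fin (n + 1), v p i.succ (m i.succ) := by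
      intro p m
      unfold prodTensor
      exact Fin.prod_univ_succ _
    have hT'sum : T' = ∑ p ∈ Finset.univ.erase p0, prodTensor (w p) := by
      funext m
      rw [Finset.sum_apply]
      have hzero : prodTensor (w p0) m = 0 := by
        rw [hwprod]
        rcases lt_or_ge ((m 0 : ℕ)) s with h | h
        · rw [if_pos h, hc (m 0), div_mul_cancel₀ _ hp0, sub_self, zero_mul]
        · rw [if_neg (Nat.not_lt.mpr h), zero_mul]
      rw [Finset.sum_erase (f := fun p => prodTensor (w p) m) (a := p0) Finset.univ hzero]
      rcases lt_or_ge ((m 0 : ℕ)) s with h | h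
      · have : ∀ p : Fin r, prodTensor (w p) m
            = prodTensor (v p) m - c (m 0) * prodTensor (v p) (Function.update m 0 top) := by
          intro p
          rw [hwprod, hvprod, hvprod]
          have h2 : (Function.update m 0 top) 0 = top := Function.update_self _ _ _
          rw [h2]
          have h3 : ∏ i : Fin (n + 1), v p i.succ (Function.update m 0 top i.succ)
              = ∏ i : Fin (n + 1), v p i.succ (m i.succ) :=
            Finset.prod_congr rfl fun i _ => by rw [hupd]
          rw [h3, if_pos h]
          ring
        rw [Finset.sum_congr rfl fun p _ => this p, Finset.sum_sub_distrib, ← Finset.mul_sum,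
          ← hTapp, ← hTapp, hT' m, if_pos h]
      · have : ∀ p : Fin r, prodTensor (w p) m = 0 := by
          intro p
          rw [hwprod, if_neg (Nat.not_lt.mpr h), zero_mul]
        rw [Finset.sum_congr rfl fun p _ => this p, hT' m, if_neg (Nat.not_lt.mpr h)]
        exact Finset.sum_const_zero.symm
    have hT'rank : HasRankLE T' (Finset.univ.erase p0).card :=
      hasRankLE_of_finset w _ hT'sum
    have hcard : (Finset.univ.erase p0).card = r - 1 := by
      rw [Finset.card_erase_of_mem (Finset.mem_univ _)]
      simp
    rw [hcard] at hT'rank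
    have h0' : ∀ m : Fin (n + 2) → Fin d, s ≤ (m 0 : ℕ) → T' m = 0 := by
      intro m hm
      rw [hT' m, if_neg (Nat.not_lt.mpr hm)]
    have h1' : ∀ m : Fin (n + 2) → Fin d, (m 0 : ℕ) < s → d - 1 ≤ ∑ i, (m i : ℕ) →
        T' m = if (∑ i, (m i : ℕ)) = d - 1 then 1 else 0 := by
      intro m hm hsum
      rw [hT' m, if_pos hm]
      set m' := Function.update m 0 top with hm'
      have hm'0 : (m' 0 : ℕ) = s := by rw [hm', Function.update_self, htop]
      have hm'sum : ∑ i, (m' i : ℕ) = s + ∑ i : Fin (n + 1), (m i.succ : ℕ) := by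
        rw [Fin.sum_univ_succ, hm'0]
        congr 1
      have hmsum : ∑ i, (m i : ℕ) = (m 0 : ℕ) + ∑ i : Fin (n + 1), (m i.succ : ℕ) :=
        Fin.sum_univ_succ _
      have hgt : d - 1 < ∑ i, (m' i : ℕ) := by omega
      have hTm' : T m' = 0 := by
        rw [h1 m' (by omega) (by omega)]
        rw [if_neg (by omega)]
      rw [hTm', h1 m (by omega) hsum]
      ring
    have := ihs (by omega) T' h0' h1' (r - 1) hT'rank
    omega

open Finset in
private lemma lower_aux (d : ℕ) (hd : 2 ≤ d) :
    ∀ n : ℕ, ∀ T : (Fin (n + 1) → Fin d) → ℂ,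
      (∀ m : Fin (n + 1) → Fin d, d - 1 ≤ ∑ i, (m i : ℕ) →
        T m = if (∑ i, (m i : ℕ)) = d - 1 then 1 else 0) →
      ∀ r : ℕ, HasRankLE T r → n * (d - 1) + 1 ≤ r := by
  intro n
  induction n with
  | zero =>
    intro T hT r hr
    set m0 : Fin 1 → Fin d := fun _ => ⟨d - 1, by omega⟩ with hm0
    have hsum : ∑ i, ((m0 i : ℕ)) = d - 1 := by simp [hm0]
    have h1 : T m0 = 1 := by rw [hT m0 hsum.ge, if_pos hsum]
    have : 1 ≤ r := by
      by_contra hc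
      have : r = 0 := by omega
      subst this
      obtain ⟨v, hv⟩ := hr
      rw [hv] at h1
      simp at h1
    omega
  | succ n IH =>
    intro T hT r hr
    have h0 : ∀ m : Fin (n + 2) → Fin d, d ≤ (m 0 : ℕ) → T m = 0 := by
      intro m hm
      exact absurd (m 0).isLt (by omega)
    have h1 : ∀ m : Fin (n + 2) → Fin d, (m 0 : ℕ) < d → d - 1 ≤ ∑ i, (m i : ℕ) →
        T m = if (∑ i, (m i : ℕ)) = d - 1 then 1 else 0 := fun m _ h => hT m h
    have := lower_inner d n hd IH d (by omega) le_rfl T h0 h1 r hr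
    have hmul : (n + 1) * (d - 1) = n * (d - 1) + (d - 1) := Nat.succ_mul _ _
    omega

/-- the tensor rank of the `n`-qudit L state is `(n−1)(d−1)+1`. -/
theorem L_tensorRank (d n : ℕ) (hd : 2 ≤ d) (hn : 2 ≤ n) :
    tensorRank (Lstate d n) = (n - 1) * (d - 1) + 1 := by
  obtain ⟨k, rfl⟩ : ∃ k, n = k + 2 := ⟨n - 2, by omega⟩
  have hk : (k + 2) - 1 = k + 1 := rfl
  have hub : HasRankLE (Lstate d (k + 2)) ((k + 1) * (d - 1) + 1) := by
    have := upper_bound d (k + 2) hd (by omega)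
    rwa [hk] at this
  have hlb : ∀ r : ℕ, HasRankLE (Lstate d (k + 2)) r → (k + 1) * (d - 1) + 1 ≤ r := by
    intro r hr
    exact lower_aux d hd (k + 1) (Lstate d (k + 2)) (fun m _ => rfl) r hr
  rw [hk]
  unfold tensorRank
  exact le_antisymm (Nat.sInf_le hub) (le_csInf ⟨_, hub⟩ fun r hr => hlb r hr)

end QIT
end
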